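/- arXiv:2507.09670 — 13 statements merged into one kernel-verified Lean document; each statement's English description precedes it below -/
import Mathlib

section
/- A Tychonoff space X is sequentially Ascoli if, and only if, each function Φ : X × 𝐬 → ℝ that is separately continuous and k-continuous is continuous, where 𝐬 = {1/n : n ∈ ℕ, n ≥ 1} ∪ {0} carries the topology induced from ℝ. -/
open Set Filter Topology

/-- A set `H` of continuous real-valued functions is equicontinuous. -/
def EquicontinuousSet {X : Type*} [TopologicalSpace X] (H : Set C(X, ℝ)) : Prop :=
  ∀ x : X, ∀ ε : ℝ, 0 < ε → ∃ U ∈ 𝓝 x, ∀ x' ∈ U, ∀ f ∈ H, |f x' - f x| < ε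

/-- `X` is Ascoli: every compact subset of `C_k(X)` is equicontinuous. -/
def AscoliSpace (X : Type*) [TopologicalSpace X] : Prop :=
  ∀ K : Set C(X, ℝ), IsCompact K → EquicontinuousSet K

/-- `X` is sequentially Ascoli: every convergent sequence in `C_k(X)` is equicontinuous. -/
def SeqAscoliSpace (X : Type*) [TopologicalSpace X] : Prop :=
  ∀ (f : ℕ → C(X, ℝ)) (g : C(X, ℝ)), Tendsto f atTop (𝓝 g) →
    EquicontinuousSet (Set.range f ∪ {g})

/-- A function is `k`-continuous if its restriction to every compact subset is continuous. -/
def KContinuous {X Y : Type*} [TopologicalSpace X] [TopologicalSpace Y] (f : X → Y) : Prop :=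
  ∀ K : Set X, IsCompact K → ContinuousOn f K

/-- `X` is a `k_ℝ`-space if every `k`-continuous real-valued function is continuous. -/
def KRSpace (X : Type*) [TopologicalSpace X] : Prop :=
  ∀ f : X → ℝ, KContinuous f → Continuous f

/-- `X` is an `s_ℝ`-space if every sequentially continuous real-valued function is continuous. -/
def SRSpace (X : Type*) [TopologicalSpace X] : Prop :=
  ∀ f : X → ℝ, SeqContinuous f → Continuous f

/-- A function on a product is separately continuous. -/
def SeparatelyContinuous {X K : Type*} [TopologicalSpace X] [TopologicalSpace K]
    (Φ : X × K → ℝ) : Prop :=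
  (∀ x : X, Continuous fun k => Φ (x, k)) ∧ (∀ k : K, Continuous fun x => Φ (x, k))

/-- `X` is pseudocompact: every continuous real-valued function on `X` is bounded. -/
def Pseudocompact (X : Type*) [TopologicalSpace X] : Prop :=
  ∀ f : X → ℝ, Continuous f → ∃ M : ℝ, ∀ x : X, |f x| ≤ M

/-- A subset `A` of `X` is functionally bounded if every continuous real-valued
function on `X` is bounded on `A`. -/
def FunctionallyBounded {X : Type*} [TopologicalSpace X] (A : Set X) : Prop :=
  ∀ f : X → ℝ, Continuous f → ∃ M : ℝ, ∀ a ∈ A, |f a| ≤ M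

/-- An `R`-quotient map: a continuous surjection such that real-valued functions on the
codomain are continuous as soon as their composition with the map is continuous. -/
def RQuotientMap {X Y : Type*} [TopologicalSpace X] [TopologicalSpace Y] (p : X → Y) : Prop :=
  Continuous p ∧ Function.Surjective p ∧ ∀ φ : Y → ℝ, Continuous (φ ∘ p) → Continuous φ

/-- The convergent sequence $\mathbf{s} = \{1/n : n ≥ 1\} ∪ \{0\}$ with the topology
induced from ℝ. -/
def convSeq : Set ℝ := insert 0 {r : ℝ | ∃ n : ℕ, r = 1 / (n + 1)}
/-!
Via `k ↦ Φ(·, k)`, a function `Φ : X × 𝐬 → ℝ` that is continuous in the first variable is a map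
`γ : 𝐬 → C(X, ℝ)`. Since `𝐬` is compact, `Φ` is separately continuous and `k`-continuous exactly
when `γ` is continuous into `C_k(X)`, and `Φ` is jointly continuous exactly when `γ` is continuous
with equicontinuous range. As `𝐬` is the one-point compactification of `ℕ`, continuous maps
`𝐬 → C_k(X)` are the convergent sequences `f_n → f` with their limits, and their ranges are the
sets `{f_n : n ∈ ℕ} ∪ {f}`.
-/

open OnePoint LightProfinite

theorem OnePoint.range_eq_range_coe_union_infty {X Y : Type*} (γ : OnePoint X → Y) :
    range γ = range (fun x : X => γ x) ∪ {γ ∞} := by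
  rw [← image_univ, ← range_coe_union_infty, image_union, image_singleton, ← range_comp]
  rfl

theorem LightProfinite.range_natUnionInftyEmbedding : range natUnionInftyEmbedding = convSeq := by
  rw [range_eq_range_coe_union_infty, union_comm, ← insert_eq, convSeq]
  congr 1
  ext r
  simp [natUnionInftyEmbedding, eq_comm]

noncomputable def convSeqHomeomorph : OnePoint ℕ ≃ₜ convSeq :=
  isClosedEmbedding_natUnionInftyEmbedding.isEmbedding.toHomeomorph.trans
    (Homeomorph.setCongr range_natUnionInftyEmbedding)

instance : CompactSpace convSeq := convSeqHomeomorph.compactSpace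

section Equicontinuity

variable {S X α : Type*} [TopologicalSpace S] [TopologicalSpace X] [UniformSpace α]

theorem Equicontinuous.continuous_uncurry_swap {F : S → X → α} (hF : Equicontinuous F)
    (hcont : ∀ x, Continuous fun k => F k x) : Continuous fun p : X × S => F p.2 p.1 := by
  rw [continuous_iff_continuousAt]
  rintro ⟨x₀, k₀⟩
  rw [ContinuousAt, Uniform.tendsto_nhds_right]
  intro U hU
  obtain ⟨V, hV, hVU⟩ := comp_mem_uniformity_sets hU
  have hk : ∀ᶠ k in 𝓝 k₀, (F k₀ x₀, F k x₀) ∈ V :=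
    Uniform.tendsto_nhds_right.mp ((hcont x₀).tendsto k₀) hV
  rw [nhds_prod_eq]
  exact mem_map.2 <| mem_of_superset (prod_mem_prod (hF x₀ V hV) hk) fun p hp =>
    hVU (SetRel.prodMk_mem_comp hp.2 (hp.1 p.2))

theorem equicontinuous_of_continuous_uncurry_swap [CompactSpace S] {F : S → X → α}
    (hF : Continuous fun p : X × S => F p.2 p.1) : Equicontinuous F := by
  intro x₀ U hU
  obtain ⟨v, hv, hvU⟩ := isCompact_univ.mem_uniformity_of_prod (f := Function.swap F)
    (by rw [univ_prod_univ]; exact hF.continuousOn) (mem_univ x₀) (symm_le_uniformity hU)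
  rw [nhdsWithin_univ] at hv
  filter_upwards [hv] with x hx k using hvU x hx k (mem_univ k)

end Equicontinuity

theorem equicontinuousSet_range_iff {ι X : Type*} [TopologicalSpace X] (γ : ι → C(X, ℝ)) :
    EquicontinuousSet (range γ) ↔ Equicontinuous fun i => ⇑(γ i) := by
  simp only [EquicontinuousSet, Equicontinuous, Metric.equicontinuousAt_iff_right,
    forall_mem_range, eventually_iff_exists_mem, Real.dist_eq, abs_sub_comm, gt_iff_lt]

section KContinuity

variable {X S : Type*} [TopologicalSpace X] [TopologicalSpace S]

theorem KContinuous.continuous_curry {Y : Type*} [TopologicalSpace Y] [CompactSpace S]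
    {Φ : X × S → Y} (hΦ : KContinuous Φ) (hcont : ∀ k, Continuous fun x => Φ (x, k)) :
    Continuous fun k => ContinuousMap.mk (fun x => Φ (x, k)) (hcont k) := by
  rw [continuous_iff_continuousAt]
  intro k₀
  refine (ContinuousMap.tendsto_compactOpen_iff_forall _ _).2 fun K hK => ?_
  have hK' : ContinuousOn Φ (K ×ˢ univ) := hΦ _ (hK.prod isCompact_univ)
  refine (ContinuousMap.continuous_of_continuous_uncurry _ ?_).continuousAt
  exact hK'.comp_continuous (by fun_prop) fun p => ⟨p.2.2, trivial⟩

theorem Continuous.kContinuous_uncurry_swap {Y : Type*} [UniformSpace Y] {γ : S → C(X, Y)}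
    (hγ : Continuous γ) : KContinuous fun p : X × S => γ p.2 p.1 := by
  intro C hC
  set K := Prod.fst '' C
  refine ContinuousOn.mono (s := K ×ˢ univ) ?_ fun p hp => ⟨mem_image_of_mem _ hp, trivial⟩
  rintro ⟨x₀, k₀⟩ -
  have hunif : TendstoUniformlyOn (fun k => ⇑(γ k)) (γ k₀) (𝓝 k₀) K :=
    ContinuousMap.tendsto_iff_forall_isCompact_tendstoUniformlyOn.mp (hγ.tendsto k₀) _
      (hC.image continuous_fst)
  rw [ContinuousWithinAt, nhdsWithin_prod_eq, nhdsWithin_univ]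
  exact TendstoUniformlyOn.tendsto_comp (fun u hu => tendsto_snd.eventually (hunif u hu))
    (γ k₀).continuous.continuousWithinAt tendsto_fst

end KContinuity

theorem seqAscoli_iff_separatelyContinuous_kContinuous_continuous_general
    {X : Type*} [TopologicalSpace X] :
    SeqAscoliSpace X ↔
      ∀ Φ : X × ↥convSeq → ℝ, SeparatelyContinuous Φ → KContinuous Φ → Continuous Φ := by
  let e := convSeqHomeomorph
  constructor
  · rintro hX Φ ⟨hΦx, hΦk⟩ hΦ
    let γ k := ContinuousMap.mk (fun x => Φ (x, k)) (hΦk k)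
    have hγ : Continuous (γ ∘ e) := (hΦ.continuous_curry hΦk).comp e.continuous
    have hequi := hX _ _ ((continuous_iff_from_nat _).mp hγ)
    rw [← range_eq_range_coe_union_infty, e.surjective.range_comp, equicontinuousSet_range_iff]
      at hequi
    exact hequi.continuous_uncurry_swap hΦx
  · intro h f g hfg
    let φ := continuousMapMkNat f g hfg
    have hγ : Continuous (φ ∘ e.symm) := φ.continuous.comp e.symm.continuous
    have hΦ := h (fun p => (φ ∘ e.symm) p.2 p.1)
      ⟨fun x => (continuous_eval_const x).comp hγ, fun k => (φ (e.symm k)).continuous⟩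
      hγ.kContinuous_uncurry_swap
    have hrange : range (φ ∘ e.symm) = range f ∪ {g} := by
      rw [e.symm.surjective.range_comp, range_eq_range_coe_union_infty]
      rfl
    rw [← hrange, equicontinuousSet_range_iff]
    exact equicontinuous_of_continuous_uncurry_swap hΦ

theorem seqAscoli_iff_separatelyContinuous_kContinuous_continuous
    {X : Type*} [TopologicalSpace X] [T35Space X] :
    SeqAscoliSpace X ↔
      ∀ Φ : X × ↥convSeq → ℝ, SeparatelyContinuous Φ → KContinuous Φ → Continuous Φ :=
  seqAscoli_iff_separatelyContinuous_kContinuous_continuous_general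
end

section
/- Let p : X → Y be an R-quotient mapping between Tychonoff spaces X and Y. If X is an Ascoli space, then Y is an Ascoli space. -/
open Set Filter Topology

/-!
For a compact `K ⊆ C_k(Y)`, equicontinuity of `K` amounts to continuity of the evaluation map
`Y → C(K, ℝ)`, where `C(K, ℝ)` carries the sup metric. Composed with `p`, this is the evaluation
map of the compact family `{f ∘ p | f ∈ K}` on the Ascoli space `X`, hence continuous. An
`R`-quotient map reflects continuity into every metric space, so the evaluation map on `Y` is
continuous as well.
-/

def ContinuousMap.flip {ι X β : Type*} [TopologicalSpace ι] [TopologicalSpace X]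
    [TopologicalSpace β] (F : C(ι, C(X, β))) (x : X) : C(ι, β) :=
  ⟨fun i => F i x, (continuous_eval_const x).comp F.continuous⟩

theorem equicontinuousSet_range_iff_continuous_flip {ι X : Type*} [TopologicalSpace ι]
    [CompactSpace ι] [TopologicalSpace X] (F : C(ι, C(X, ℝ))) :
    EquicontinuousSet (range F) ↔ Continuous F.flip := by
  simp only [EquicontinuousSet, continuous_iff_continuousAt, ContinuousAt, Metric.tendsto_nhds,
    forall_mem_range, ← eventually_iff_exists_mem]
  refine forall_congr' fun x => forall₂_congr fun ε hε => eventually_congr ?_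
  filter_upwards with x'
  rw [ContinuousMap.dist_lt_iff hε]
  rfl

/-- Test the `R`-quotient property on the real-valued function `y ↦ dist (g y) (g y₀)`. -/
theorem RQuotientMap.continuous_of_continuous_comp {X Y M : Type*} [TopologicalSpace X]
    [TopologicalSpace Y] [PseudoMetricSpace M] {p : X → Y} (hp : RQuotientMap p) {g : Y → M}
    (hg : Continuous (g ∘ p)) : Continuous g := by
  refine continuous_iff_continuousAt.2 fun y₀ => tendsto_iff_dist_tendsto_zero.2 ?_
  have hdist : Continuous fun y => dist (g y) (g y₀) :=
    hp.2.2 _ (hg.dist continuous_const)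
  simpa using hdist.tendsto y₀

theorem ascoli_of_rQuotient_general {X Y : Type*} [TopologicalSpace X]
    [TopologicalSpace Y] (p : X → Y) (hp : RQuotientMap p)
    (hX : AscoliSpace X) : AscoliSpace Y := by
  intro K hK
  have : CompactSpace K := isCompact_iff_compactSpace.mp hK
  let incl : C(K, C(Y, ℝ)) := ⟨Subtype.val, continuous_subtype_val⟩
  let lift : C(K, C(X, ℝ)) := (ContinuousMap.compRightContinuousMap ℝ ⟨p, hp.1⟩).comp incl
  have hlift : Continuous lift.flip :=
    (equicontinuousSet_range_iff_continuous_flip lift).1 (hX _ (isCompact_range lift.continuous))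
  -- `incl.flip ∘ p` is `lift.flip` by definition.
  have hincl : Continuous incl.flip := hp.continuous_of_continuous_comp hlift
  simpa [incl] using (equicontinuousSet_range_iff_continuous_flip incl).2 hincl

theorem ascoli_of_rQuotient {X Y : Type*} [TopologicalSpace X] [T35Space X]
    [TopologicalSpace Y] [T35Space Y] (p : X → Y) (hp : RQuotientMap p)
    (hX : AscoliSpace X) : AscoliSpace Y :=
  ascoli_of_rQuotient_general p hp hX
end

section
/- Let p : X → Y be an R-quotient mapping between Tychonoff spaces X and Y. If X is a sequentially Ascoli space, then Y is a sequentially Ascoli space. -/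
/-!
Fix `y₀ : Y` and `ε > 0`, and let `φ y = sup_{h ∈ H} min (|h y - h y₀|, ε)` for a family `H` of
functions on `Y`. Truncating at `ε` keeps the supremum finite, and `|φ y - φ y'| ≤ sup_{h ∈ H} |h y - h y'|`, so
`φ ∘ p` is continuous as soon as `{h ∘ p | h ∈ H}` is equicontinuous. Then `φ` is continuous
because `p` is `R`-quotient, and `{φ < ε}` is a neighbourhood of `y₀` on which
`|h y - h y₀| < ε` for every `h ∈ H`. Since precomposition with `p` is continuous on `C_k`,
convergent sequences on `Y` pull back to convergent, hence equicontinuous, sequences on `X`.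
-/

open Set Filter Topology

lemma abs_ciSup_sub_ciSup_le {ι : Type*} {a b : ι → ℝ} (ha : BddAbove (range a))
    (hb : BddAbove (range b)) {δ : ℝ} (hδ : 0 ≤ δ) (h : ∀ i, |a i - b i| ≤ δ) :
    |(⨆ i, a i) - ⨆ i, b i| ≤ δ := by
  rcases isEmpty_or_nonempty ι with hι | hι
  · simpa [Real.iSup_of_isEmpty] using hδ
  rw [abs_sub_le_iff, sub_le_iff_le_add, sub_le_iff_le_add]
  constructor
  · refine ciSup_le fun i => ?_
    linarith [(abs_le.1 (h i)).2, le_ciSup hb i]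
  · refine ciSup_le fun i => ?_
    linarith [(abs_le.1 (h i)).1, le_ciSup ha i]

lemma EquicontinuousAt.continuousAt_iSup_min_abs_sub {ι X : Type*} [TopologicalSpace X]
    {F : ι → X → ℝ} {x₀ : X} (hF : EquicontinuousAt F x₀) (c : ι → ℝ) (ε : ℝ) :
    ContinuousAt (fun x => ⨆ i, min |F i x - c i| ε) x₀ := by
  rw [Metric.equicontinuousAt_iff_right] at hF
  have hbdd : ∀ x, BddAbove (range fun i => min |F i x - c i| ε) := fun x =>
    ⟨ε, forall_mem_range.2 fun i => min_le_right _ _⟩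
  refine Metric.tendsto_nhds.2 fun δ hδ => ?_
  filter_upwards [hF (δ / 2) (half_pos hδ)] with x hx
  rw [Real.dist_eq]
  refine (abs_ciSup_sub_ciSup_le (hbdd x) (hbdd x₀) (half_pos hδ).le fun i => ?_).trans_lt
    (half_lt_self hδ)
  calc |min |F i x - c i| ε - min |F i x₀ - c i| ε|
      ≤ |(|F i x - c i|) - (|F i x₀ - c i|)| := by
        simpa using abs_min_sub_min_le_max (|F i x - c i|) ε (|F i x₀ - c i|) ε
    _ ≤ |F i x - F i x₀| := by
        simpa using abs_abs_sub_abs_le_abs_sub (F i x - c i) (F i x₀ - c i)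
    _ ≤ δ / 2 := by
        rw [abs_sub_comm, ← Real.dist_eq]
        exact (hx i).le

theorem RQuotientMap.equicontinuous_of_equicontinuous_comp {ι X Y : Type*} [TopologicalSpace X]
    [TopologicalSpace Y] {p : X → Y} (hp : RQuotientMap p) {F : ι → Y → ℝ}
    (hF : Equicontinuous fun i => F i ∘ p) : Equicontinuous F := by
  intro y₀
  rw [Metric.equicontinuousAt_iff_right]
  intro ε hε
  set φ : Y → ℝ := fun y => ⨆ i, min |F i y - F i y₀| ε
  have hφ : Continuous φ := hp.2.2 φ <|
    continuous_iff_continuousAt.2 fun x => (hF x).continuousAt_iSup_min_abs_sub _ ε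
  have hφy₀ : φ y₀ = 0 := by simp [φ, hε.le, Real.iSup_const_zero]
  filter_upwards [hφ.continuousAt.eventually (gt_mem_nhds (hφy₀ ▸ hε))] with y hy i
  rw [Real.dist_eq, abs_sub_comm]
  by_contra! h
  have : min |F i y - F i y₀| ε ≤ φ y :=
    le_ciSup (f := fun i => min |F i y - F i y₀| ε)
      ⟨ε, forall_mem_range.2 fun i => min_le_right _ _⟩ i
  rw [min_eq_right h] at this
  exact this.not_gt hy

lemma equicontinuousSet_iff_equicontinuous {X : Type*} [TopologicalSpace X] {H : Set C(X, ℝ)} :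
    EquicontinuousSet H ↔ Equicontinuous fun h : H => ⇑(h : C(X, ℝ)) := by
  simp only [EquicontinuousSet, Equicontinuous, Metric.equicontinuousAt_iff_right, Real.dist_eq,
    Filter.eventually_iff_exists_mem, Subtype.forall, abs_sub_comm]

theorem seqAscoli_of_rQuotient_general {X Y : Type*} [TopologicalSpace X]
    [TopologicalSpace Y] (p : X → Y) (hp : RQuotientMap p)
    (hX : SeqAscoliSpace X) : SeqAscoliSpace Y := by
  intro f g hfg
  set q : C(X, Y) := ⟨p, hp.1⟩
  have hpull : EquicontinuousSet ((fun h : C(Y, ℝ) => h.comp q) '' (range f ∪ {g})) := by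
    rw [image_union, image_singleton, ← range_comp]
    exact hX _ _ (((ContinuousMap.continuous_precomp q).tendsto g).comp hfg)
  rw [equicontinuousSet_iff_equicontinuous] at hpull ⊢
  exact hp.equicontinuous_of_equicontinuous_comp
    (hpull.comp fun h => ⟨_, mem_image_of_mem _ h.2⟩)

theorem seqAscoli_of_rQuotient {X Y : Type*} [TopologicalSpace X] [T35Space X]
    [TopologicalSpace Y] [T35Space Y] (p : X → Y) (hp : RQuotientMap p)
    (hX : SeqAscoliSpace X) : SeqAscoliSpace Y :=
  seqAscoli_of_rQuotient_general p hp hX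
end

section
/- Every open subspace U of an Ascoli Tychonoff space X is an Ascoli space (with the subspace topology). -/
open Set Filter Topology

/-!
Fix `x ∈ U` and a compact `K ⊆ C_k(U)`. Take a cutoff `ψ` on `X` equal to `1` near `x` and
vanishing off `U`, and send `f ∈ C(U)` to `ψ · clamp_M ∘ f`, extended by `0` outside `U`.
Clamping to `[-M, M]` is what makes the extension continuous at the boundary of `U` and the
map `C_k(U) → C_k(X)` continuous. The image of `K` is therefore compact, hence equicontinuous
at `x`; near `x` the image of `f` is `clamp_M ∘ f`, and with `M` beyond the bound of `K` at `x`,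
equicontinuity forces `f` itself to stay inside `[-M, M]` near `x`, where clamping is the identity.
-/

def clamp (M t : ℝ) : ℝ := max (-M) (min M t)

lemma clamp_of_nonpos {M : ℝ} (hM : M ≤ 0) (t : ℝ) : clamp M t = -M :=
  max_eq_left <| (min_le_left M t).trans (by linarith)

lemma abs_clamp_le (M t : ℝ) : |clamp M t| ≤ |M| := by
  rcases le_total 0 M with hM | hM
  · rw [abs_of_nonneg hM, abs_le]
    exact ⟨le_max_left _ _, max_le (by linarith) (min_le_left _ _)⟩
  · rw [clamp_of_nonpos hM, abs_neg]

lemma clamp_of_abs_le {M t : ℝ} (h : |t| ≤ M) : clamp M t = t := by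
  rw [abs_le] at h
  rw [clamp, min_eq_right h.2, max_eq_right h.1]

lemma abs_lt_of_abs_clamp_lt {M t : ℝ} (h : |clamp M t| < M) : |t| < M := by
  simp only [clamp, abs_lt, lt_max_iff, max_lt_iff, lt_min_iff, min_lt_iff, lt_self_iff_false,
    false_or] at h ⊢
  tauto

lemma abs_clamp_sub_clamp_le (M a b : ℝ) : |clamp M a - clamp M b| ≤ |a - b| := by
  rcases le_total 0 M with hM | hM
  · exact Set.abs_projIcc_sub_projIcc (by linarith : -M ≤ M)
  · simp [clamp_of_nonpos hM]

lemma continuous_clamp (M : ℝ) : Continuous (clamp M) :=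
  continuous_const.max (continuous_const.min continuous_id)

lemma abs_sub_lt_of_abs_clamp_sub_lt {a b C ε : ℝ} (ha : |a| ≤ C)
    (h : |clamp (C + 1) b - a| < ε) (hε : ε ≤ 1) : |b - a| < ε := by
  have : |clamp (C + 1) b| < C + 1 := by
    linarith [abs_sub_abs_le_abs_sub (clamp (C + 1) b) a]
  rwa [← clamp_of_abs_le (abs_lt_of_abs_clamp_lt this).le]

lemma exists_cutoff_eventually_eq_one {X : Type*} [TopologicalSpace X]
    [CompletelyRegularSpace X] {U : Set X} (hU : IsOpen U) {x : X} (hx : x ∈ U) : ∃ ψ : X → ℝ, Continuous ψ ∧ (∀ y, |ψ y| ≤ 1) ∧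
      (∀ᶠ y in 𝓝 x, ψ y = 1) ∧ ∀ y ∉ U, ψ y = 0 := by
  obtain ⟨f, hf, hfx, hfU⟩ := CompletelyRegularSpace.completely_regular_isOpen x U hU hx
  refine ⟨fun y => min 1 (2 * (1 - f y)), by fun_prop, fun y => ?_, ?_, fun y hy => ?_⟩
  · have := (f y).2.2
    exact abs_le.2 ⟨le_min (by norm_num) (by linarith), min_le_left _ _⟩
  · filter_upwards [(continuous_subtype_val.comp hf).continuousAt.eventually_lt
      continuousAt_const (show (f x : ℝ) < 1 / 2 by simp [hfx])] with y hy
    exact min_eq_left (by simp only [Function.comp_apply] at hy; linarith)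
  · simp [hfU hy]

section ExtendClamp

variable {X : Type*} [TopologicalSpace X] {U : Set X}

open scoped Classical in
noncomputable def extendClamp (M : ℝ) (f : C(U, ℝ)) (y : X) : ℝ :=
  if h : y ∈ U then clamp M (f ⟨y, h⟩) else 0

lemma extendClamp_coe (M : ℝ) (f : C(U, ℝ)) (u : U) : extendClamp M f u = clamp M (f u) := by
  simp [extendClamp]

lemma abs_extendClamp_le (M : ℝ) (f : C(U, ℝ)) (y : X) : |extendClamp M f y| ≤ |M| := by
  unfold extendClamp
  split_ifs
  · exact abs_clamp_le _ _
  · simp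

lemma continuousAt_extendClamp (hU : IsOpen U) (M : ℝ) (f : C(U, ℝ)) {y : X} (hy : y ∈ U) :
    ContinuousAt (extendClamp M f) y := by
  refine ContinuousOn.continuousAt ?_ (hU.mem_nhds hy)
  rw [continuousOn_iff_continuous_domRestrict]
  have : U.domRestrict (extendClamp M f) = clamp M ∘ f := funext (extendClamp_coe M f)
  rw [this]
  exact (continuous_clamp M).comp f.continuous

variable {ψ : X → ℝ}

lemma continuous_mul_extendClamp (hU : IsOpen U) (hψ : Continuous ψ) (hψU : ∀ y ∉ U, ψ y = 0)
    (M : ℝ) (f : C(U, ℝ)) : Continuous fun y => ψ y * extendClamp M f y := by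
  refine continuous_iff_continuousAt.2 fun y => ?_
  by_cases hy : y ∈ U
  · exact hψ.continuousAt.mul (continuousAt_extendClamp hU M f hy)
  · have hψy : Tendsto ψ (𝓝 y) (𝓝 0) := hψU y hy ▸ hψ.continuousAt
    simpa [ContinuousAt, hψU y hy] using hψy.zero_mul_isBoundedUnder_le
      ⟨|M|, eventually_map.2 <| .of_forall fun z => abs_extendClamp_le M f z⟩

noncomputable def mulExtendClamp (hU : IsOpen U) (hψ : Continuous ψ) (hψU : ∀ y ∉ U, ψ y = 0)
    (M : ℝ) (f : C(U, ℝ)) : C(X, ℝ) :=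
  ⟨fun y => ψ y * extendClamp M f y, continuous_mul_extendClamp hU hψ hψU M f⟩

variable {hU : IsOpen U} {hψ : Continuous ψ} {hψU : ∀ y ∉ U, ψ y = 0} {M : ℝ}

lemma mulExtendClamp_coe_of_eq_one (f : C(U, ℝ)) {u : U} (hu : ψ u = 1) :
    mulExtendClamp hU hψ hψU M f u = clamp M (f u) := by
  simp [mulExtendClamp, hu, extendClamp_coe]

lemma abs_mulExtendClamp_sub_le (f g : C(U, ℝ)) (y : X) :
    |mulExtendClamp hU hψ hψU M f y - mulExtendClamp hU hψ hψU M g y| ≤ 2 * |M| * |ψ y| := by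
  simp only [mulExtendClamp, ContinuousMap.coe_mk, ← mul_sub, abs_mul]
  have := abs_sub (extendClamp M f y) (extendClamp M g y)
  nlinarith [abs_extendClamp_le M f y, abs_extendClamp_le M g y, abs_nonneg (ψ y)]

lemma abs_mulExtendClamp_sub_le_of_mem (hψ1 : ∀ y, |ψ y| ≤ 1) (f g : C(U, ℝ)) (u : U) :
    |mulExtendClamp hU hψ hψU M f u - mulExtendClamp hU hψ hψU M g u| ≤ |f u - g u| := by
  simp only [mulExtendClamp, ContinuousMap.coe_mk, ← mul_sub, abs_mul, extendClamp_coe]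
  exact (mul_le_of_le_one_left (abs_nonneg _) (hψ1 u)).trans (abs_clamp_sub_clamp_le M _ _)

lemma continuous_mulExtendClamp (hψ1 : ∀ y, |ψ y| ≤ 1) :
    Continuous (mulExtendClamp hU hψ hψU M) := by
  refine continuous_iff_continuousAt.2 fun g => ?_
  rw [ContinuousAt, ContinuousMap.tendsto_iff_forall_isCompact_tendstoUniformlyOn]
  intro Q hQ
  rw [Metric.tendstoUniformlyOn_iff]
  intro δ hδ
  set c := δ / (2 * |M| + 1)
  have hc : 2 * |M| * c < δ := by
    rw [mul_div_assoc', div_lt_iff₀ (by positivity)]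
    nlinarith
  have hcU : ∀ y, c ≤ |ψ y| → y ∈ U := fun y hy => by_contra fun hyU => by
    rw [hψU y hyU, abs_zero] at hy
    exact (div_pos hδ (by positivity)).not_ge hy
  -- Where `|ψ| ≥ c` the set is a compact subset of `U`; elsewhere the bound `2|M||ψ|` suffices.
  have hQc : IsCompact (((↑) : U → X) ⁻¹' (Q ∩ {y | c ≤ |ψ y|})) :=
    Topology.IsInducing.subtypeVal.isCompact_preimage'
      (hQ.inter_right (isClosed_le continuous_const hψ.abs)) fun y hy => ⟨⟨y, hcU y hy.2⟩, rfl⟩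
  have hg := ContinuousMap.tendsto_iff_forall_isCompact_tendstoUniformlyOn.1
    (tendsto_id (x := 𝓝 g)) _ hQc
  filter_upwards [Metric.tendstoUniformlyOn_iff.1 hg δ hδ] with f hf y hy
  rw [Real.dist_eq]
  by_cases hyc : c ≤ |ψ y|
  · calc _ ≤ |g ⟨y, hcU y hyc⟩ - f ⟨y, hcU y hyc⟩| := abs_mulExtendClamp_sub_le_of_mem hψ1 g f _
      _ < δ := by simpa [Real.dist_eq] using hf ⟨y, hcU y hyc⟩ ⟨hy, hyc⟩
  · calc _ ≤ 2 * |M| * |ψ y| := abs_mulExtendClamp_sub_le g f y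
      _ ≤ 2 * |M| * c := by gcongr; exact (not_le.1 hyc).le
      _ < δ := hc

end ExtendClamp

theorem ascoli_of_isOpen_subspace {X : Type*} [TopologicalSpace X] [T35Space X]
    (hX : AscoliSpace X) (U : Set X) (hU : IsOpen U) : AscoliSpace ↥U := by
  intro K hK x ε hε
  obtain ⟨ψ, hψ, hψ1, hψx, hψU⟩ := exists_cutoff_eventually_eq_one hU x.2
  obtain ⟨C, hC⟩ := hK.exists_bound_of_continuousOn (continuous_eval_const x).continuousOn
  set T := mulExtendClamp hU hψ hψU (C + 1)
  obtain ⟨W, hW, hWT⟩ := hX (T '' K)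
    (hK.image (continuous_mulExtendClamp hψ1)) x (min ε 1) (by positivity)
  refine ⟨(↑) ⁻¹' (W ∩ {y | ψ y = 1}), continuous_subtype_val.continuousAt.preimage_mem_nhds
    (inter_mem hW hψx), fun x' hx' f hf => ?_⟩
  have hfx : |f x| ≤ C := hC f hf
  have hTx : T f x = f x := by
    rw [mulExtendClamp_coe_of_eq_one _ hψx.self_of_nhds, clamp_of_abs_le (by linarith)]
  have hT := hWT x' hx'.1 (T f) (mem_image_of_mem T hf)
  rw [hTx, mulExtendClamp_coe_of_eq_one _ hx'.2] at hT
  exact (abs_sub_lt_of_abs_clamp_sub_lt hfx hT (min_le_right _ _)).trans_le (min_le_left _ _)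
end

section
/- Every open subspace U of a sequentially Ascoli Tychonoff space X is a sequentially Ascoli space (with the subspace topology). -/
open Set Filter Topology

/-! Around `x ∈ U` choose a cutoff `χ` on `X` that is `1` near `x` and whose closed support lies
in `U`. Multiplying by `χ` and extending by zero is a continuous map `C_k(U) → C_k(X)` (on a compact
`K ⊆ X` only the compact piece `K ∩ tsupport χ ⊆ U` matters) that leaves functions unchanged near
`x`. It sends a convergent sequence of `C_k(U)` to one of `C_k(X)`, and equicontinuity at `x` of
the image is equicontinuity at `x` of the original sequence. -/

section CutoffExtension

variable {X : Type*} {U : Set X}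

open Classical in
noncomputable def extendByZero (U : Set X) (h : U → ℝ) : X → ℝ :=
  fun y => if hy : y ∈ U then h ⟨y, hy⟩ else 0

@[simp]
lemma extendByZero_coe (h : U → ℝ) (y : U) : extendByZero U h y = h y := by
  simp [extendByZero]

variable [TopologicalSpace X]

lemma continuousAt_extendByZero (hU : IsOpen U) {h : U → ℝ} (hh : Continuous h) {y : X}
    (hy : y ∈ U) : ContinuousAt (extendByZero U h) y := by
  have hcomp : extendByZero U h ∘ Subtype.val = h := funext (extendByZero_coe h)
  rw [← Subtype.coe_mk y hy, ← hU.isOpenEmbedding_subtypeVal.continuousAt_iff, hcomp]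
  exact hh.continuousAt

noncomputable def cutoffExtend (hU : IsOpen U) (χ : C(X, ℝ)) (hχ : tsupport χ ⊆ U)
    (h : C(U, ℝ)) : C(X, ℝ) where
  toFun := χ * extendByZero U h
  continuous_toFun := continuous_of_tsupport fun _ hy =>
    χ.continuous.continuousAt.mul <|
      continuousAt_extendByZero hU h.continuous (hχ (tsupport_mul_subset_left hy))

variable (hU : IsOpen U) (χ : C(X, ℝ)) (hχ : tsupport χ ⊆ U)

lemma cutoffExtend_apply (h : C(U, ℝ)) (y : X) :
    cutoffExtend hU χ hχ h y = χ y * extendByZero U h y := rfl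

@[simp]
lemma cutoffExtend_apply_coe (h : C(U, ℝ)) (y : U) : cutoffExtend hU χ hχ h y = χ y * h y := by
  simp [cutoffExtend_apply]

lemma continuous_cutoffExtend : Continuous (cutoffExtend hU χ hχ) := by
  refine continuous_iff_continuousAt.2 fun h => ?_
  rw [ContinuousAt, ContinuousMap.tendsto_iff_forall_isCompact_tendstoUniformlyOn]
  intro K hK
  have hKχ : IsCompact (Subtype.val ⁻¹' (K ∩ tsupport χ) : Set U) := by
    rw [Subtype.isCompact_iff, Subtype.image_preimage_coe,
      inter_eq_right.2 (inter_subset_right.trans hχ)]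
    exact hK.inter_right (isClosed_tsupport χ)
  have hconv := Metric.tendstoUniformlyOn_iff.1 <|
    ContinuousMap.tendsto_iff_forall_isCompact_tendstoUniformlyOn.1 (tendsto_id (x := 𝓝 h)) _ hKχ
  obtain ⟨C, hC⟩ := hK.exists_bound_of_continuousOn χ.continuous.continuousOn
  rw [Metric.tendstoUniformlyOn_iff]
  intro ε hε
  have hC₁ : 0 < |C| + 1 := by positivity
  filter_upwards [hconv (ε / (|C| + 1)) (div_pos hε hC₁)] with h' hh' y hy
  by_cases hyχ : y ∈ tsupport χ
  · lift y to U using hχ hyχ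
    have hd := hh' y ⟨hy, hyχ⟩
    simp only [cutoffExtend_apply_coe]
    calc dist (χ y * h y) (χ y * h' y) = |χ y| * dist (h y) (h' y) := by
          simp only [Real.dist_eq, ← mul_sub, abs_mul]
      _ ≤ (|C| + 1) * dist (h y) (h' y) := by
          gcongr
          exact (hC y hy).trans ((le_abs_self C).trans (lt_add_one _).le)
      _ < (|C| + 1) * (ε / (|C| + 1)) := by gcongr; exact hd
      _ = ε := mul_div_cancel₀ ε hC₁.ne'
  · simpa [cutoffExtend_apply, image_eq_zero_of_notMem_tsupport hyχ] using hε

end CutoffExtension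

theorem CompletelyRegularSpace.exists_eventuallyEq_one_tsupport_subset
    {X : Type*} [TopologicalSpace X] [CompletelyRegularSpace X] {U : Set X} (hU : IsOpen U)
    {x : X} (hx : x ∈ U) : ∃ χ : C(X, ℝ), χ =ᶠ[𝓝 x] 1 ∧ tsupport χ ⊆ U := by
  obtain ⟨φ, hφ, hφx, hφU⟩ := CompletelyRegularSpace.completely_regular_isOpen x U hU hx
  have hφ' : Continuous fun y => (φ y : ℝ) := continuous_subtype_val.comp hφ
  -- `χ` is `1` where `φ ≤ 1/4` and `0` where `φ ≥ 1/2`.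
  refine ⟨⟨fun y => max 0 (min 1 (2 - 4 * φ y)), by fun_prop⟩, ?_, ?_⟩
  · filter_upwards [(isOpen_lt hφ' continuous_const).mem_nhds (show (φ x : ℝ) < 1 / 4 by
      simp [hφx])] with y hy
    simp only [ContinuousMap.coe_mk, Pi.one_apply]
    rw [min_eq_left (by linarith [show (φ y : ℝ) < 1 / 4 from hy]), max_eq_right zero_le_one]
  · have hsupp : Function.support (fun y => max 0 (min 1 (2 - 4 * (φ y : ℝ)))) ⊆
        {y | (φ y : ℝ) ≤ 1 / 2} := fun y hy => by
      rw [mem_ofPred_eq]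
      by_contra! hy'
      exact hy (max_eq_left ((min_le_right _ _).trans (by linarith)))
    refine (closure_minimal hsupp (isClosed_le hφ' continuous_const)).trans fun y hy => ?_
    by_contra hyU
    have h1 : (φ y : ℝ) = 1 := by simpa using congrArg Subtype.val (hφU hyU)
    norm_num [h1] at hy

theorem seqAscoli_of_isOpen_subspace {X : Type*} [TopologicalSpace X] [T35Space X]
    (hX : SeqAscoliSpace X) (U : Set X) (hU : IsOpen U) : SeqAscoliSpace ↥U := by
  intro f g hfg x ε hε
  obtain ⟨χ, hχx, hχU⟩ := CompletelyRegularSpace.exists_eventuallyEq_one_tsupport_subset hU x.2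
  set T := cutoffExtend hU χ hχU
  have hTx : ∀ᶠ y : U in 𝓝 x, ∀ h : C(U, ℝ), T h y = h y := by
    filter_upwards [continuous_subtype_val.continuousAt.preimage_mem_nhds hχx] with y hy h
    simp [T, show χ y = 1 from hy]
  obtain ⟨V, hV, hVε⟩ :=
    hX (T ∘ f) (T g) (((continuous_cutoffExtend hU χ hχU).tendsto g).comp hfg) x ε hε
  refine ⟨Subtype.val ⁻¹' V ∩ {y : U | ∀ h : C(U, ℝ), T h y = h y},
    inter_mem (continuous_subtype_val.continuousAt.preimage_mem_nhds hV) hTx, ?_⟩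
  rintro x' ⟨hx'V, hx'T⟩ h hh
  have hTh : T h ∈ range (T ∘ f) ∪ {T g} := by
    rcases hh with ⟨n, rfl⟩ | rfl
    exacts [Or.inl ⟨n, rfl⟩, Or.inr rfl]
  rw [← hx'T h, ← hTx.self_of_nhds h]
  exact hVε x' hx'V (T h) hTh
end

section
/- A Tychonoff space X is an Ascoli space if, and only if, for every open subset A of X and each point x in the closure of A there is a subspace B of X which is Ascoli (with the subspace topology) such that x ∈ B and x lies in the closure of A ∩ B. -/
open Set Filter Topology

lemma ascoliSpace_of_homeomorph {X Y : Type*} [TopologicalSpace X] [TopologicalSpace Y]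
    (e : X ≃ₜ Y) (h : AscoliSpace Y) : AscoliSpace X := by
  intro K hK x ε hε
  set Φ : C(X, ℝ) → C(Y, ℝ) := fun g => g.comp ⟨e.symm, e.symm.continuous⟩ with hΦ
  have hΦc : Continuous Φ := ContinuousMap.continuous_precomp _
  obtain ⟨U, hU, hUe⟩ := h (Φ '' K) (hK.image hΦc) (e x) ε hε
  refine ⟨e ⁻¹' U, e.continuous.continuousAt.preimage_mem_nhds hU, fun x' hx' f hf => ?_⟩
  have := hUe (e x') hx' (Φ f) ⟨f, hf, rfl⟩
  simpa [hΦ] using this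

theorem ascoli_iff_cover {X : Type*} [TopologicalSpace X] [T35Space X] :
    AscoliSpace X ↔
      ∀ A : Set X, IsOpen A → ∀ x ∈ closure A,
        ∃ B : Set X, AscoliSpace ↥B ∧ x ∈ B ∧ x ∈ closure (A ∩ B) := by
  constructor
  · intro hX A _ x hx
    refine ⟨Set.univ, ascoliSpace_of_homeomorph (Homeomorph.Set.univ X) hX, mem_univ x, ?_⟩
    simpa using hx
  · intro hcov K hK
    by_contra hne
    simp only [EquicontinuousSet, not_forall] at hne
    obtain ⟨x₀, ε, hε, hbad⟩ := hne
    push_neg at hbad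
    -- the "bad" open set
    set A : Set X := ⋃ f ∈ K, (fun x' => |f x' - f x₀|) ⁻¹' Ioi (ε / 2) with hA
    have hAopen : IsOpen A := by
      refine isOpen_biUnion fun f _ => ?_
      exact isOpen_Ioi.preimage (by continuity)
    have hxA : x₀ ∈ closure A := by
      rw [mem_closure_iff_nhds]
      intro U hU
      obtain ⟨x', hx'U, f, hfK, hfge⟩ := hbad U hU
      exact ⟨x', hx'U, mem_biUnion hfK (by simp; linarith)⟩
    obtain ⟨B, hBasc, hx₀B, hxcl⟩ := hcov A hAopen x₀ hxA
    -- restriction map to B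
    set ρ : C(X, ℝ) → C(B, ℝ) := fun g => g.comp ⟨Subtype.val, continuous_subtype_val⟩ with hρ
    have hρc : Continuous ρ := ContinuousMap.continuous_precomp _
    obtain ⟨U, hU, hUe⟩ := hBasc (ρ '' K) (hK.image hρc) ⟨x₀, hx₀B⟩ (ε / 2) (by linarith)
    obtain ⟨V, hV, hVU⟩ := (mem_nhds_subtype B ⟨x₀, hx₀B⟩ U).mp hU
    have : ((interior V ∩ A) ∩ B).Nonempty := by
      have := mem_closure_iff_nhds.mp hxcl (interior V) (interior_mem_nhds.mpr hV)
      obtain ⟨y, hy1, hy2, hy3⟩ := this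
      exact ⟨y, ⟨hy1, hy2⟩, hy3⟩
    obtain ⟨y, ⟨hyV, hyA⟩, hyB⟩ := this
    obtain ⟨f, hfK, hfy⟩ : ∃ f ∈ K, ε / 2 < |f y - f x₀| := by
      simp only [hA, mem_iUnion, mem_preimage, mem_Ioi] at hyA
      obtain ⟨f, hf, hfy⟩ := hyA
      exact ⟨f, hf, hfy⟩
    have hyU : (⟨y, hyB⟩ : B) ∈ U := hVU (by simpa using interior_subset hyV)
    have := hUe ⟨y, hyB⟩ hyU (ρ f) ⟨f, hfK, rfl⟩
    simp only [hρ, ContinuousMap.comp_apply, ContinuousMap.coe_mk] at this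
    linarith [abs_lt.mp this |>.1, abs_lt.mp this |>.2]
end

section
/- A Tychonoff space X is an Ascoli space if, and only if, there is a family 𝓜 of subspaces of X, each of which is an Ascoli space with the subspace topology, such that X is strongly functionally generated by 𝓜. -/
open Set Filter Topology

/-! Given a compact `K ⊆ C_k(X)` and `x ∈ X`, the truncated oscillation
`y ↦ sup_{f ∈ K} min (|f y - f x|) 1` is `1`-Lipschitz for the uniform distance on `K`, so it
is continuous on every `M ∈ 𝓜`, where `K|M` is compact in `C_k(M)` and hence equicontinuous.
As `X` is strongly functionally generated by `𝓜`, it is continuous; it vanishes at `x`, and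
being small near `x` is exactly equicontinuity of `K` at `x`. -/

section

variable {X : Type*} [TopologicalSpace X]

def IsStronglyFunctionallyGeneratedBy (𝓜 : Set (Set X)) : Prop :=
  ∀ f : X → ℝ, (∀ M ∈ 𝓜, ContinuousOn f M) → Continuous f

lemma isStronglyFunctionallyGeneratedBy_univ :
    IsStronglyFunctionallyGeneratedBy {(univ : Set X)} := by
  intro f hf
  simpa using hf univ rfl

lemma AscoliSpace.of_homeomorph {Y : Type*} [TopologicalSpace Y] (e : X ≃ₜ Y)
    (hX : AscoliSpace X) : AscoliSpace Y := by
  intro K hK y ε hε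
  have hK' : IsCompact ((fun f : C(Y, ℝ) => f.comp (e : C(X, Y))) '' K) :=
    hK.image (ContinuousMap.continuous_precomp _)
  obtain ⟨U, hU, hUε⟩ := hX _ hK' (e.symm y) ε hε
  refine ⟨e.symm ⁻¹' U, e.symm.continuous.continuousAt.preimage_mem_nhds hU,
    fun y' hy' f hf => ?_⟩
  simpa using hUε (e.symm y') hy' (f.comp (e : C(X, Y))) ⟨f, hf, rfl⟩

lemma AscoliSpace.equicontinuousSet_restrict {M : Set X} (hM : AscoliSpace M)
    {K : Set C(X, ℝ)} (hK : IsCompact K) :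
    EquicontinuousSet ((fun f : C(X, ℝ) => f.restrict M) '' K) :=
  hM _ (hK.image (ContinuousMap.continuous_restrict M))

noncomputable def truncOsc (K : Set C(X, ℝ)) (x y : X) : ℝ :=
  ⨆ f : K, min |(f : C(X, ℝ)) y - (f : C(X, ℝ)) x| 1

section truncOsc

variable {K : Set C(X, ℝ)} {x y z : X}

lemma min_abs_sub_le_truncOsc {f : C(X, ℝ)} (hf : f ∈ K) :
    min |f y - f x| 1 ≤ truncOsc K x y :=
  le_ciSup (f := fun f : K => min |(f : C(X, ℝ)) y - (f : C(X, ℝ)) x| 1)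
    ⟨1, by rintro _ ⟨f, rfl⟩; exact min_le_right _ _⟩ ⟨f, hf⟩

lemma truncOsc_nonneg : 0 ≤ truncOsc K x y :=
  Real.iSup_nonneg fun _ => le_min (abs_nonneg _) zero_le_one

lemma truncOsc_self : truncOsc K x x = 0 := by
  simp [truncOsc]

lemma truncOsc_le_add {ε : ℝ} (hε : 0 ≤ ε) (h : ∀ f ∈ K, |f y - f z| ≤ ε) :
    truncOsc K x y ≤ truncOsc K x z + ε := by
  refine Real.iSup_le (fun ⟨f, hf⟩ => ?_) (add_nonneg truncOsc_nonneg hε)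
  have htri := abs_sub_le (f y) (f z) (f x)
  calc min |f y - f x| 1
      ≤ min (|f z - f x| + ε) (1 + ε) :=
        min_le_min (by linarith [h f hf]) (le_add_of_nonneg_right hε)
    _ = min |f z - f x| 1 + ε := min_add_add_right _ _ _
    _ ≤ truncOsc K x z + ε := add_le_add (min_abs_sub_le_truncOsc hf) le_rfl

lemma abs_truncOsc_sub_le {ε : ℝ} (hε : 0 ≤ ε) (h : ∀ f ∈ K, |f y - f z| ≤ ε) :
    |truncOsc K x y - truncOsc K x z| ≤ ε := by
  have h' : ∀ f ∈ K, |f z - f y| ≤ ε := fun f hf => abs_sub_comm (f z) (f y) ▸ h f hf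
  rw [abs_sub_le_iff]
  constructor <;> linarith [truncOsc_le_add (x := x) hε h, truncOsc_le_add (x := x) hε h']

lemma continuousOn_truncOsc {M : Set X}
    (hM : EquicontinuousSet ((fun f : C(X, ℝ) => f.restrict M) '' K)) :
    ContinuousOn (truncOsc K x) M := by
  rw [continuousOn_iff_continuous_domRestrict, continuous_iff_continuousAt]
  intro m
  refine Metric.tendsto_nhds.2 fun δ hδ => ?_
  obtain ⟨U, hU, hUδ⟩ := hM m (δ / 2) (half_pos hδ)
  filter_upwards [hU] with u hu
  have hclose : ∀ f ∈ K, |f u - f m| ≤ δ / 2 := fun f hf =>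
    (hUδ u hu (f.restrict M) ⟨f, hf, rfl⟩).le
  rw [Real.dist_eq]
  exact (abs_truncOsc_sub_le (half_pos hδ).le hclose).trans_lt (half_lt_self hδ)

lemma equicontinuousSet_of_forall_continuousAt_truncOsc
    (h : ∀ x, ContinuousAt (truncOsc K x) x) : EquicontinuousSet K := by
  intro x ε hε
  refine ⟨truncOsc K x ⁻¹' Iio (min ε 1), (h x).preimage_mem_nhds ?_, fun y hy f hf => ?_⟩
  · rw [truncOsc_self]
    exact Iio_mem_nhds (lt_min hε one_pos)
  · have hy : truncOsc K x y < min ε 1 := hy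
    by_contra! hεf
    exact hy.not_ge ((min_le_min_right 1 hεf).trans (min_abs_sub_le_truncOsc hf))

end truncOsc

lemma AscoliSpace.of_isStronglyFunctionallyGeneratedBy {𝓜 : Set (Set X)}
    (hAscoli : ∀ M ∈ 𝓜, AscoliSpace M) (hgen : IsStronglyFunctionallyGeneratedBy 𝓜) :
    AscoliSpace X := fun _K hK =>
  equicontinuousSet_of_forall_continuousAt_truncOsc fun _x =>
    (hgen _ fun M hM =>
      continuousOn_truncOsc ((hAscoli M hM).equicontinuousSet_restrict hK)).continuousAt

end

theorem ascoli_iff_stronglyFunctionallyGenerated_general {X : Type*} [TopologicalSpace X] :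
    AscoliSpace X ↔
      ∃ 𝓜 : Set (Set X), (∀ M ∈ 𝓜, AscoliSpace ↥M) ∧
        ∀ f : X → ℝ, (∀ M ∈ 𝓜, ContinuousOn f M) → Continuous f := by
  constructor
  · intro hX
    refine ⟨{univ}, ?_, isStronglyFunctionallyGeneratedBy_univ⟩
    rintro M rfl
    exact hX.of_homeomorph (Homeomorph.Set.univ X).symm
  · rintro ⟨𝓜, hAscoli, hgen⟩
    exact .of_isStronglyFunctionallyGeneratedBy hAscoli hgen

theorem ascoli_iff_stronglyFunctionallyGenerated {X : Type*} [TopologicalSpace X] [T35Space X] :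
    AscoliSpace X ↔
      ∃ 𝓜 : Set (Set X), (∀ M ∈ 𝓜, AscoliSpace ↥M) ∧
        ∀ f : X → ℝ, (∀ M ∈ 𝓜, ContinuousOn f M) → Continuous f :=
  ascoli_iff_stronglyFunctionallyGenerated_general
end

section
/- Let Y be a dense subset of a homogeneous Tychonoff space X. If Y (with the subspace topology) is an Ascoli space, then X is an Ascoli space. -/
open Set Filter Topology

theorem ascoli_of_dense_in_homogeneous {X : Type*} [TopologicalSpace X] [T35Space X]
    (hhom : ∀ x y : X, ∃ h : X ≃ₜ X, h x = y)
    (Y : Set X) (hdense : Dense Y) (hY : AscoliSpace ↥Y) : AscoliSpace X := by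
  intro K hK x ε hε
  haveI : Nonempty X := ⟨x⟩
  obtain ⟨y, hy⟩ := hdense.nonempty
  obtain ⟨h, hhy⟩ := hhom y x
  -- the map f ↦ (f ∘ h)|_Y is continuous C_k(X) → C_k(Y)
  let ι : C(↥Y, X) := ⟨Subtype.val, continuous_subtype_val⟩
  let hcm : C(X, X) := ⟨h, h.continuous⟩
  let Φ : C(X, ℝ) → C(↥Y, ℝ) := fun f => (f.comp hcm).comp ι
  have hΦ : Continuous Φ := by
    exact (ContinuousMap.continuous_precomp ι).comp (ContinuousMap.continuous_precomp hcm)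
  have hK' : IsCompact (Φ '' K) := hK.image hΦ
  obtain ⟨U', hU', hU'sp⟩ := hY (Φ '' K) hK' ⟨y, hy⟩ (ε / 2) (by linarith)
  -- pull back to a neighborhood V of y in X
  rw [mem_nhds_subtype] at hU'
  obtain ⟨V, hV, hVU'⟩ := hU'
  set W := interior V with hW
  have hWy : y ∈ W := mem_interior_iff_mem_nhds.2 hV
  have hWopen : IsOpen W := isOpen_interior
  -- on W, all f ∈ K satisfy |f (h x') - f (h y)| ≤ ε/2
  have key : ∀ x' ∈ W, ∀ f ∈ K, |f (h x') - f (h y)| ≤ ε / 2 := by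
    intro x' hx' f hf
    have hcl : x' ∈ closure (W ∩ Y) := hdense.open_subset_closure_inter hWopen hx'
    have hSclosed : IsClosed {z : X | |f (h z) - f (h y)| ≤ ε / 2} := by
      have : Continuous fun z : X => |f (h z) - f (h y)| :=
        ((f.continuous.comp h.continuous).sub continuous_const).abs
      exact isClosed_le this continuous_const
    have hsub : W ∩ Y ⊆ {z : X | |f (h z) - f (h y)| ≤ ε / 2} := by
      rintro z ⟨hzW, hzY⟩
      have hz' : (⟨z, hzY⟩ : ↥Y) ∈ U' := hVU' (show z ∈ V from interior_subset hzW)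
      have := hU'sp ⟨z, hzY⟩ hz' (Φ f) ⟨f, hf, rfl⟩
      simp only [Φ, ContinuousMap.comp_apply, ι, hcm] at this
      exact le_of_lt this
    exact hSclosed.closure_subset ((closure_mono hsub) hcl)
  refine ⟨h '' W, ?_, ?_⟩
  · have : h '' W ∈ 𝓝 (h y) := (h.isOpenMap W hWopen).mem_nhds ⟨y, hWy, rfl⟩
    rwa [hhy] at this
  · rintro x'' ⟨x', hx', rfl⟩ f hf
    calc |f (h x') - f x| ≤ ε / 2 := by rw [← hhy]; exact key x' hx' f hf
      _ < ε := by linarith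
end

section
/- Let λ be an index set of cardinality greater than ℵ₁, let X be a subset of the product [1/2, 1]^λ, let S := {(x_i) ∈ [0,1]^λ : the support {i ∈ λ : x_i ≠ 0} is countable}, and let Y := S ∪ X carry the subspace topology of [0,1]^λ. Then Y is pseudocompact, Y is an Ascoli space, and X is a closed subset of Y. -/
/-!
Since `Y` contains the Σ-product `S`, every continuous `f : Y → ℝ` depends on countably many
coordinates `A` (a closing-off argument over the compact slices `{x | x i = 0 for i ∉ B}`,
`B` countable, which lie in `S`). For countably many functions at once, the same holds with one `A`,
so all of them take their values on the compact slice of `A`, onto which `Y` retracts.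
This bounds each `f`, and shows that a compact `K ⊆ C_k(Y)` contains no uniformly separated
sequence; so `K` is uniformly totally bounded, hence equicontinuous. Finally, `λ` being
uncountable, every point of `S` has a zero coordinate, so `X = {y ∈ Y | ∀ i, 1/2 ≤ y i}`.
-/

open Set Filter Topology

section CompactRepresentation

variable {Y : Type*} [TopologicalSpace Y]

theorem pseudocompact_of_forall_exists_isCompact
    (h : ∀ f : C(Y, ℝ), ∃ Z : Set Y, IsCompact Z ∧ ∀ y, ∃ z ∈ Z, f z = f y) :
    Pseudocompact Y := by
  intro f hf
  obtain ⟨Z, hZ, hZf⟩ := h ⟨f, hf⟩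
  obtain ⟨M, hM⟩ := hZ.exists_bound_of_continuousOn hf.continuousOn
  refine ⟨M, fun y => ?_⟩
  obtain ⟨z, hz, hzy⟩ := hZf y
  rw [← Real.norm_eq_abs, ← show f z = f y from hzy]
  exact hM z hz

theorem equicontinuousSet_of_forall_exists_finset {H : Set C(Y, ℝ)}
    (h : ∀ δ > 0, ∃ T : Finset C(Y, ℝ), ∀ f ∈ H, ∃ g ∈ T, ∀ y, |f y - g y| ≤ δ) :
    EquicontinuousSet H := by
  intro y₀ ε hε
  obtain ⟨T, hT⟩ := h (ε / 4) (by positivity)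
  have hU : ∀ᶠ y in 𝓝 y₀, ∀ g ∈ T, |g y - g y₀| < ε / 4 :=
    (eventually_all_finset T).2 fun g _ =>
      Metric.tendsto_nhds.1 g.continuous.continuousAt (ε / 4) (by positivity)
  refine ⟨_, hU, fun y hy f hf => ?_⟩
  obtain ⟨g, hgT, hfg⟩ := hT f hf
  have hgy := hy g hgT
  have hfy := hfg y
  have hfy₀ := abs_sub_comm (g y₀) (f y₀) ▸ hfg y₀
  have := abs_sub_le (f y) (g y) (f y₀)
  have := abs_sub_le (g y) (g y₀) (f y₀)
  linarith

theorem exists_lt_forall_abs_sub_lt_of_isCompact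
    (h : ∀ φ : ℕ → C(Y, ℝ), ∃ Z : Set Y, IsCompact Z ∧ ∀ y, ∃ z ∈ Z, ∀ n, φ n z = φ n y)
    {K : Set C(Y, ℝ)} (hK : IsCompact K) {φ : ℕ → C(Y, ℝ)} (hφK : ∀ n, φ n ∈ K)
    {δ : ℝ} (hδ : 0 < δ) :
    ∃ m n, m < n ∧ ∀ y, |φ n y - φ m y| < δ := by
  obtain ⟨Z, hZ, hZφ⟩ := h φ
  obtain ⟨g, -, hg⟩ := hK.exists_clusterPt (f := map φ atTop)
    (tendsto_principal.2 (Eventually.of_forall hφK))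
  have hN : ∀ᶠ f in 𝓝 g, ∀ z ∈ Z, dist (g z) (f z) < δ / 2 :=
    UniformSpace.mem_nhds_iff.2 ⟨_, ContinuousMap.hasBasis_compactConvergenceUniformity.mem_of_mem
      (i := (Z, {p : ℝ × ℝ | dist p.1 p.2 < δ / 2}))
      ⟨hZ, Metric.dist_mem_uniformity (half_pos hδ)⟩, fun _ hf => hf⟩
  have hfreq : ∃ᶠ n in atTop, ∀ z ∈ Z, dist (g z) (φ n z) < δ / 2 :=
    MapClusterPt.frequently hg hN
  obtain ⟨m, hm⟩ := hfreq.exists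
  obtain ⟨n, hmn, hn⟩ := frequently_atTop.1 hfreq (m + 1)
  refine ⟨m, n, hmn, fun y => ?_⟩
  obtain ⟨z, hz, hzy⟩ := hZφ y
  rw [← hzy n, ← hzy m, ← Real.dist_eq]
  calc dist (φ n z) (φ m z) ≤ dist (g z) (φ n z) + dist (g z) (φ m z) := dist_triangle_left ..
    _ < δ / 2 + δ / 2 := add_lt_add (hn z hz) (hm z hz)
    _ = δ := add_halves δ

theorem exists_finset_forall_abs_sub_le_of_isCompact
    (h : ∀ φ : ℕ → C(Y, ℝ), ∃ Z : Set Y, IsCompact Z ∧ ∀ y, ∃ z ∈ Z, ∀ n, φ n z = φ n y)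
    {K : Set C(Y, ℝ)} (hK : IsCompact K) {δ : ℝ} (hδ : 0 < δ) :
    ∃ T : Finset C(Y, ℝ), ∀ f ∈ K, ∃ g ∈ T, ∀ y, |f y - g y| ≤ δ := by
  by_contra! hsep
  obtain ⟨φ, hφK, hφsep⟩ := exists_seq_of_forall_finset_exists (· ∈ K)
    (fun g f => ∃ y, δ < |f y - g y|) fun T _ => hsep T
  obtain ⟨m, n, hmn, hclose⟩ := exists_lt_forall_abs_sub_lt_of_isCompact h hK hφK hδ
  obtain ⟨y, hy⟩ := hφsep m n hmn
  exact (hclose y).not_gt hy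

theorem ascoliSpace_of_forall_exists_isCompact
    (h : ∀ φ : ℕ → C(Y, ℝ), ∃ Z : Set Y, IsCompact Z ∧ ∀ y, ∃ z ∈ Z, ∀ n, φ n z = φ n y) :
    AscoliSpace Y := fun _ hK =>
  equicontinuousSet_of_forall_exists_finset fun _ hδ =>
    exists_finset_forall_abs_sub_le_of_isCompact h hK hδ

end CompactRepresentation

theorem Set.exists_countable_finite_subset_closure {ι : Type*} (Φ : Set ι → Set ι)
    (hΦ : ∀ B : Set ι, B.Countable → (Φ B).Countable) :
    ∃ A : Set ι, A.Countable ∧ ∀ F : Set ι, F.Finite → F ⊆ A →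
      ∃ B : Set ι, F ⊆ B ∧ B ⊆ A ∧ B.Countable ∧ Φ B ⊆ A := by
  set s : ℕ → Set ι := fun n => (fun B => B ∪ Φ B)^[n] ∅
  have hsucc : ∀ n, s (n + 1) = s n ∪ Φ (s n) := fun n => Function.iterate_succ_apply' _ n _
  have hs : ∀ n, (s n).Countable := by
    intro n
    induction n with
    | zero => exact countable_empty
    | succ n ih => rw [hsucc]; exact ih.union (hΦ _ ih)
  have hmono : Monotone s := monotone_nat_of_le_succ fun n => hsucc n ▸ subset_union_left
  refine ⟨⋃ n, s n, countable_iUnion hs, fun F hF hFA => ?_⟩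
  obtain ⟨n, hn⟩ := hmono.directed_le.exists_mem_subset_of_finset_subset_biUnion
    (hF.coe_toFinset.symm ▸ hFA)
  exact ⟨s n, hF.coe_toFinset ▸ hn, subset_iUnion s n, hs n,
    (hsucc n ▸ subset_union_right).trans (subset_iUnion s (n + 1))⟩

section SigmaProduct

variable {ι : Type*} {E : ι → Type*}

def sigmaProduct (e : ∀ i, E i) : Set (∀ i, E i) := {x | {i | x i ≠ e i}.Countable}

theorem setOf_piecewise_ne_subset (A : Set ι) [∀ j, Decidable (j ∈ A)] (x e : ∀ i, E i) :
    {i | A.piecewise x e i ≠ e i} ⊆ A :=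
  fun _ hi => by_contra fun hiA => hi (piecewise_eq_of_notMem _ _ _ hiA)

theorem piecewise_mem_sigmaProduct {A : Set ι} [∀ j, Decidable (j ∈ A)] (hA : A.Countable)
    (x e : ∀ i, E i) : A.piecewise x e ∈ sigmaProduct e :=
  hA.mono (setOf_piecewise_ne_subset A x e)

variable [∀ i, TopologicalSpace (E i)]

theorem continuous_piecewise_const (A : Set ι) [∀ j, Decidable (j ∈ A)] (e : ∀ i, E i) :
    Continuous fun x : ∀ i, E i => A.piecewise x e :=
  continuous_pi fun i => by
    by_cases hi : i ∈ A <;> simp only [Set.piecewise, hi, if_true, if_false]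
    exacts [continuous_apply i, continuous_const]

theorem tendsto_finset_piecewise [DecidableEq ι] (x e : ∀ i, E i) :
    Tendsto (fun F : Finset ι => (F : Set ι).piecewise x e) atTop (𝓝 x) := by
  refine tendsto_pi_nhds.2 fun i => tendsto_const_nhds.congr' ?_
  filter_upwards [eventually_ge_atTop {i}] with F hF
  exact (piecewise_eq_of_mem _ _ _ (Finset.singleton_subset_iff.1 hF)).symm

theorem exists_finset_forall_dist_lt_of_isCompact {Y : Set (∀ i, E i)} {f : Y → ℝ}
    (hf : Continuous f) {C : Set (∀ i, E i)} (hC : IsCompact C) (hCY : C ⊆ Y) {ε : ℝ}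
    (hε : 0 < ε) :
    ∃ F : Finset ι, ∀ x y : Y, x.1 ∈ C → (∀ i ∈ F, x.1 i = y.1 i) → dist (f x) (f y) < ε := by
  classical
  have hcyl : ∀ x (hx : x ∈ C), ∃ (I : Finset ι) (t : ∀ i, Set (E i)), (∀ i, t i ∈ 𝓝 (x i)) ∧
      ∀ z : Y, z.1 ∈ (I : Set ι).pi t → dist (f z) (f ⟨x, hCY hx⟩) < ε / 2 := by
    intro x hx
    obtain ⟨W, hW, hWf⟩ := (mem_nhds_subtype _ _ _).1 <|
      hf.continuousAt.preimage_mem_nhds (Metric.ball_mem_nhds (f ⟨x, hCY hx⟩) (half_pos hε))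
    rw [nhds_pi, Filter.mem_pi'] at hW
    obtain ⟨I, t, ht, hIt⟩ := hW
    exact ⟨I, t, ht, fun z hz => hWf (hIt hz)⟩
  choose I t ht hIt using hcyl
  obtain ⟨T, hT⟩ := hC.elim_nhds_subcover' (fun x hx => (I x hx : Set ι).pi (t x hx))
    fun x hx => set_pi_mem_nhds (I x hx).finite_toSet fun i _ => ht x hx i
  refine ⟨T.biUnion fun p => I p.1 p.2, fun x y hx hxy => ?_⟩
  obtain ⟨p, hpT, hxp⟩ := mem_iUnion₂.1 (hT hx)
  have hyp : y.1 ∈ (I p.1 p.2 : Set ι).pi (t p.1 p.2) := fun i hi =>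
    hxy i (Finset.mem_biUnion.2 ⟨p, hpT, hi⟩) ▸ hxp i hi
  calc dist (f x) (f y) ≤ dist (f x) (f ⟨p, hCY p.2⟩) + dist (f y) (f ⟨p, hCY p.2⟩) :=
        dist_triangle_right ..
    _ < ε / 2 + ε / 2 := add_lt_add (hIt _ _ x hxp) (hIt _ _ y hyp)
    _ = ε := add_halves ε

theorem exists_countable_forall_eq_of_isCompact {Y : Set (∀ i, E i)} {f : Y → ℝ}
    (hf : Continuous f) {C : Set (∀ i, E i)} (hC : IsCompact C) (hCY : C ⊆ Y) :
    ∃ D : Set ι, D.Countable ∧ ∀ x y : Y, x.1 ∈ C → (∀ i ∈ D, x.1 i = y.1 i) → f x = f y := by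
  choose F hF using fun n : ℕ =>
    exists_finset_forall_dist_lt_of_isCompact hf hC hCY (Nat.one_div_pos_of_nat (n := n))
  refine ⟨⋃ n, F n, countable_iUnion fun n => (F n).countable_toSet, fun x y hx hxy => ?_⟩
  by_contra hne
  obtain ⟨n, hn⟩ := exists_nat_one_div_lt (dist_pos.2 hne)
  exact (hF n x y hx fun i hi => hxy i (mem_iUnion.2 ⟨n, hi⟩)).not_gt hn

variable [∀ i, CompactSpace (E i)] {e : ∀ i, E i} {Y : Set (∀ i, E i)}

/-- `A` is closed off under adding the coordinates `D B` that control `f` on the compact slice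
`range (B.piecewise · e)`; the truncation to `A` of a finitely supported `x` lies in the slice of
some `B ⊆ A` with `D B ⊆ A`, and agrees with `x` on `A`. -/
theorem Continuous.exists_countable_forall_eq_of_finite (hY : sigmaProduct e ⊆ Y)
    {f : Y → ℝ} (hf : Continuous f) :
    ∃ A : Set ι, A.Countable ∧ ∀ x y : Y, {i | x.1 i ≠ e i}.Finite → {i | y.1 i ≠ e i}.Finite →
      (∀ i ∈ A, x.1 i = y.1 i) → f x = f y := by
  classical
  have hslice : ∀ B : Set ι, B.Countable → ∃ D : Set ι, D.Countable ∧ ∀ x y : Y,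
      x.1 ∈ range (B.piecewise · e) → (∀ i ∈ D, x.1 i = y.1 i) → f x = f y := fun B hB =>
    exists_countable_forall_eq_of_isCompact hf (isCompact_range (continuous_piecewise_const B e))
      (range_subset_iff.2 fun x => hY (piecewise_mem_sigmaProduct hB x e))
  choose! D hD hDf using hslice
  obtain ⟨A, hA, hAD⟩ := Set.exists_countable_finite_subset_closure D hD
  have htrunc : ∀ x : Y, {i | x.1 i ≠ e i}.Finite →
      f x = f ⟨A.piecewise x.1 e, hY (piecewise_mem_sigmaProduct hA x.1 e)⟩ := by
    intro x hx
    obtain ⟨B, hxB, hBA, hB, hDB⟩ := hAD _ (hx.inter_of_left A) inter_subset_right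
    refine (hDf B hB _ _ ⟨x.1, funext fun i => ?_⟩ fun i hi => ?_).symm
    · by_cases hiB : i ∈ B
      · simp [Set.piecewise, hiB, hBA hiB]
      · have : i ∈ A → x.1 i = e i := fun hiA => by_contra fun hi => hiB (hxB ⟨hi, hiA⟩)
        simp only [Set.piecewise, hiB]
        grind
    · exact piecewise_eq_of_mem _ _ _ (hDB hi)
  refine ⟨A, hA, fun x y hx hy hxy => ?_⟩
  rw [htrunc x hx, htrunc y hy]
  congr 2
  funext i
  by_cases hi : i ∈ A <;> simp [Set.piecewise, hi, hxy i]

/-- Finitely supported points are dense, so `f` is determined by its values on them. -/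
theorem Continuous.exists_countable_forall_eq_of_sigmaProduct_subset (hY : sigmaProduct e ⊆ Y)
    {f : Y → ℝ} (hf : Continuous f) :
    ∃ A : Set ι, A.Countable ∧ ∀ u v : Y, (∀ i ∈ A, u.1 i = v.1 i) → f u = f v := by
  classical
  obtain ⟨A, hA, hAf⟩ := hf.exists_countable_forall_eq_of_finite hY
  have hmem : ∀ (F : Finset ι) (x : ∀ i, E i), (F : Set ι).piecewise x e ∈ Y := fun F x =>
    hY (piecewise_mem_sigmaProduct F.countable_toSet x e)
  have hlim : ∀ w : Y, Tendsto (fun F : Finset ι => f ⟨(F : Set ι).piecewise w e, hmem F w⟩)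
      atTop (𝓝 (f w)) := fun w =>
    (hf.tendsto w).comp (tendsto_subtype_rng.2 (tendsto_finset_piecewise w.1 e))
  refine ⟨A, hA, fun u v huv => tendsto_nhds_unique ((hlim u).congr fun F => ?_) (hlim v)⟩
  refine hAf _ _ (F.finite_toSet.subset (setOf_piecewise_ne_subset _ _ e))
    (F.finite_toSet.subset (setOf_piecewise_ne_subset _ _ e)) fun i hi => ?_
  by_cases hiF : i ∈ (F : Set ι) <;> simp [Set.piecewise, hiF, huv i hi]

theorem exists_isCompact_forall_apply_eq_of_sigmaProduct_subset (hY : sigmaProduct e ⊆ Y)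
    (φ : ℕ → C(Y, ℝ)) :
    ∃ Z : Set Y, IsCompact Z ∧ ∀ y, ∃ z ∈ Z, ∀ n, φ n z = φ n y := by
  classical
  choose A hA hAφ using fun n =>
    (φ n).continuous.exists_countable_forall_eq_of_sigmaProduct_subset hY
  have hU : (⋃ n, A n).Countable := countable_iUnion hA
  have hmem : ∀ x, (⋃ n, A n).piecewise x e ∈ Y := fun x =>
    hY (piecewise_mem_sigmaProduct hU x e)
  refine ⟨Subtype.val ⁻¹' range ((⋃ n, A n).piecewise · e), ?_, fun y =>
    ⟨⟨_, hmem y⟩, mem_range_self _, fun n => hAφ n _ _ fun i hi =>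
      piecewise_eq_of_mem _ _ _ (mem_iUnion.2 ⟨n, hi⟩)⟩⟩
  exact IsInducing.subtypeVal.isCompact_preimage' (isCompact_range (continuous_piecewise_const _ e))
    (by rw [Subtype.range_coe]; exact range_subset_iff.2 hmem)

end SigmaProduct

theorem isClosed_setOf_mem_of_subset_union {ι : Type*} [Uncountable ι]
    {X Y : Set (ι → Set.Icc (0 : ℝ) 1)} (hX : ∀ x ∈ X, ∀ i : ι, (1 : ℝ) / 2 ≤ (x i : ℝ))
    (hY : Y ⊆ {x | Set.Countable {i : ι | (x i : ℝ) ≠ 0}} ∪ X) :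
    IsClosed {y : ↥Y | (y : ι → Set.Icc (0 : ℝ) 1) ∈ X} := by
  have hXY : {y : ↥Y | y.1 ∈ X} = {y : ↥Y | ∀ i, (1 : ℝ) / 2 ≤ (y.1 i : ℝ)} := by
    ext y
    refine ⟨fun hy => hX _ hy, fun hy => (hY y.2).resolve_left fun hS => ?_⟩
    exact not_countable_univ (α := ι) (hS.mono fun i _ => (one_half_pos.trans_le (hy i)).ne')
  rw [hXY, ofPred_forall]
  exact isClosed_iInter fun i => isClosed_le continuous_const
    (continuous_subtype_val.comp ((continuous_apply i).comp continuous_subtype_val))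

theorem pseudocompact_ascoli_closed {ι : Type*}
    (hι : Cardinal.aleph 1 < Cardinal.mk ι)
    (X S Y : Set (ι → Set.Icc (0 : ℝ) 1))
    (hX : ∀ x ∈ X, ∀ i : ι, (1 : ℝ) / 2 ≤ (x i : ℝ))
    (hS : S = {x | Set.Countable {i : ι | (x i : ℝ) ≠ 0}})
    (hY : Y = S ∪ X) :
    Pseudocompact ↥Y ∧ AscoliSpace ↥Y ∧
      IsClosed {y : ↥Y | (y : ι → Set.Icc (0 : ℝ) 1) ∈ X} := by
  have : Uncountable ι := Cardinal.aleph0_lt_mk_iff.1 (Cardinal.aleph0_lt_aleph_one.trans hι)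
  have hsigma : sigmaProduct 0 ⊆ Y := fun x hx => by
    rw [hY, hS]
    left
    simp only [mem_ofPred_eq, Set.Icc.coe_ne_zero]
    exact hx
  have hcpt := exists_isCompact_forall_apply_eq_of_sigmaProduct_subset hsigma
  refine ⟨pseudocompact_of_forall_exists_isCompact fun f => ?_,
    ascoliSpace_of_forall_exists_isCompact hcpt,
    isClosed_setOf_mem_of_subset_union hX (hS ▸ hY.subset)⟩
  obtain ⟨Z, hZ, hZf⟩ := hcpt fun _ => f
  exact ⟨Z, hZ, fun y => (hZf y).imp fun _ ⟨hz, hzy⟩ => ⟨hz, hzy 0⟩⟩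
end

section
/- Let Y be a locally compact Hausdorff (Tychonoff) space, and let X be a k_ℝ-space. Then the product X × Y is a k_ℝ-space. -/
open Set Filter Topology

/-!
Fix a compact neighbourhood `K` of `y₀`. For a `k`-continuous `f` on `X × Y`, the sections
`x ↦ f (x, ·)` form a map `X → C(K, ℝ)` which is continuous on every compact `L ⊆ X`,
because `f` is continuous on `L × K`. As `C(K, ℝ)` is metrizable, the `k_ℝ` property of `X`
makes this map continuous, and uncurrying it shows that `f` is continuous on the
neighbourhood `X × K` of `(x₀, y₀)`.
-/

section

variable {X Y Z : Type*} [TopologicalSpace X] [TopologicalSpace Y] [TopologicalSpace Z]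

theorem KContinuous.continuous_prod_restrict {f : X × Y → Z} (hf : KContinuous f) {L : Set X}
    {K : Set Y} (hL : IsCompact L) (hK : IsCompact K) :
    Continuous fun p : L × K => f (p.1, p.2) :=
  (hf _ (hL.prod hK)).comp_continuous (by fun_prop) fun p => ⟨p.1.2, p.2.2⟩

def KContinuous.curryOn {f : X × Y → Z} (hf : KContinuous f) {K : Set Y} (hK : IsCompact K)
    (x : X) : C(K, Z) where
  toFun y := f (x, y)
  continuous_toFun := (hf.continuous_prod_restrict isCompact_singleton hK).comp
    (by fun_prop : Continuous fun y : K => ((⟨x, rfl⟩ : ({x} : Set X)), y))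

theorem KContinuous.kContinuous_curryOn {f : X × Y → Z} (hf : KContinuous f) {K : Set Y}
    (hK : IsCompact K) : KContinuous (hf.curryOn hK) := by
  intro L hL
  rw [continuousOn_iff_continuous_domRestrict]
  exact (ContinuousMap.curry ⟨_, hf.continuous_prod_restrict hL hK⟩).continuous

theorem KRSpace.continuous_of_kContinuous {M : Type*} [PseudoMetricSpace M] (hX : KRSpace X)
    {g : X → M} (hg : KContinuous g) : Continuous g := by
  refine continuous_iff_continuousAt.2 fun x₀ => tendsto_iff_dist_tendsto_zero.2 ?_
  have hd : Continuous fun x => dist (g x) (g x₀) :=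
    hX _ fun L hL => (continuous_id.dist continuous_const).comp_continuousOn (hg L hL)
  simpa only [dist_self] using hd.tendsto x₀

theorem KRSpace.prod_of_weaklyLocallyCompactSpace [WeaklyLocallyCompactSpace Y]
    (hX : KRSpace X) : KRSpace (X × Y) := by
  intro f hf
  refine continuous_iff_continuousAt.2 fun ⟨x₀, y₀⟩ => ?_
  obtain ⟨K, hK, hKy₀⟩ := exists_compact_mem_nhds y₀
  have : CompactSpace K := isCompact_iff_compactSpace.mp hK
  have hF : Continuous (hf.curryOn hK) := hX.continuous_of_kContinuous (hf.kContinuous_curryOn hK)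
  have hfXK : Continuous fun p : X × K => hf.curryOn hK p.1 p.2 :=
    continuous_eval.comp ((hF.comp continuous_fst).prodMk continuous_snd)
  have hfOn : ContinuousOn f (univ ×ˢ K) :=
    continuousOn_iff_continuous_domRestrict.2 <| hfXK.comp
      (by fun_prop : Continuous fun q : ↥(univ ×ˢ K) => (q.1.1, (⟨q.1.2, q.2.2⟩ : K)))
  exact hfOn.continuousAt (prod_mem_nhds univ_mem hKy₀)

end

theorem kRSpace_prod_locallyCompact_general {X Y : Type*} [TopologicalSpace X]
    [TopologicalSpace Y] [LocallyCompactSpace Y]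
    (hX : KRSpace X) : KRSpace (X × Y) :=
  hX.prod_of_weaklyLocallyCompactSpace

theorem kRSpace_prod_locallyCompact {X Y : Type*} [TopologicalSpace X] [T35Space X]
    [TopologicalSpace Y] [T35Space Y] [LocallyCompactSpace Y]
    (hX : KRSpace X) : KRSpace (X × Y) :=
  kRSpace_prod_locallyCompact_general hX
end

section
/- For a Tychonoff space X the following are equivalent: (i) X is a k_ℝ-space; (ii) for every compact Hausdorff space K the product X × K is a k_ℝ-space; (iii) for every compact Hausdorff space K, each k-continuous function f : X × K → ℝ is continuous. -/
open Set Filter Topology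

/-!
For compact `K`, a `k`-continuous `f : X × K → ℝ` curries to a map `X → C(K, ℝ)` which is
continuous on every compact `C ⊆ X`, because `f` is continuous on `C × K`. Since `C(K, ℝ)` is a
metric space, continuity of the curried map at `x₀` amounts to continuity of the real function
`x ↦ ‖f(x, ·) - f(x₀, ·)‖∞`, which is `k`-continuous and hence continuous when `X` is a
`k_ℝ`-space; uncurrying gives continuity of `f`. Conversely `X` is a retract of `X × K`.
-/

namespace KContinuous

variable {X Y Z : Type*} [TopologicalSpace X] [TopologicalSpace Y] [TopologicalSpace Z]

theorem comp_continuous {f : Y → Z} (hf : KContinuous f) {g : X → Y} (hg : Continuous g) :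
    KContinuous (f ∘ g) := fun C hC =>
  (hf _ (hC.image hg)).comp hg.continuousOn (mapsTo_image g C)

theorem continuous [CompactSpace X] {f : X → Y} (hf : KContinuous f) : Continuous f :=
  continuousOn_univ.mp (hf univ isCompact_univ)

def curry {K : Type*} [TopologicalSpace K] [CompactSpace K] {f : X × K → Y}
    (hf : KContinuous f) (x : X) : C(K, Y) :=
  ⟨fun k => f (x, k), (hf.comp_continuous (Continuous.prodMk_right x)).continuous⟩

theorem kContinuous_curry {K : Type*} [TopologicalSpace K] [CompactSpace K] {f : X × K → Y}
    (hf : KContinuous f) : KContinuous hf.curry := by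
  intro C hC
  have : CompactSpace C := isCompact_iff_compactSpace.mp hC
  rw [continuousOn_iff_continuous_domRestrict]
  have hfC : Continuous fun p : C × K => f (p.1.1, p.2) :=
    (hf.comp_continuous (continuous_subtype_val.prodMap continuous_id)).continuous
  exact (ContinuousMap.mk _ hfC).curry.continuous

end KContinuous

namespace KRSpace

variable {X : Type*} [TopologicalSpace X]

theorem continuous_of_kContinuous_s14 {Y : Type*} [PseudoMetricSpace Y] (hX : KRSpace X)
    {F : X → Y} (hF : KContinuous F) : Continuous F := by
  refine continuous_iff_continuousAt.mpr fun x₀ => ?_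
  rw [ContinuousAt, tendsto_iff_dist_tendsto_zero]
  have hdist : Continuous fun x => dist (F x) (F x₀) := hX _ fun C hC =>
    (continuous_id.dist continuous_const).comp_continuousOn (hF C hC)
  simpa using hdist.tendsto x₀

theorem prod_compact (hX : KRSpace X) {K : Type*} [TopologicalSpace K] [CompactSpace K] :
    KRSpace (X × K) := by
  intro f hf
  have hcurry : Continuous hf.curry := hX.continuous_of_kContinuous_s14 hf.kContinuous_curry
  exact ContinuousEval.continuous_eval.comp (hcurry.prodMap continuous_id)

theorem of_retract {Y : Type*} [TopologicalSpace Y] (hY : KRSpace Y) {s : X → Y} {r : Y → X}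
    (hs : Continuous s) (hr : Continuous r) (hrs : r ∘ s = id) : KRSpace X := by
  intro f hf
  have hfr : Continuous (f ∘ r) := hY _ (hf.comp_continuous hr)
  simpa [Function.comp_assoc, hrs] using hfr.comp hs

end KRSpace

theorem kRSpace_iff_prod_compact_general {X : Type u} [TopologicalSpace X] :
    (KRSpace X ↔
      ∀ (K : Type v) [TopologicalSpace K] [CompactSpace K] [T2Space K],
        KRSpace (X × K)) ∧
    (KRSpace X ↔
      ∀ (K : Type v) [TopologicalSpace K] [CompactSpace K] [T2Space K],
        ∀ f : X × K → ℝ, KContinuous f → Continuous f) := by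
  have hiff : KRSpace X ↔
      ∀ (K : Type v) [TopologicalSpace K] [CompactSpace K] [T2Space K], KRSpace (X × K) :=
    ⟨fun hX _ _ _ _ => hX.prod_compact, fun h =>
      (h PUnit.{v + 1}).of_retract (Continuous.prodMk_left PUnit.unit) continuous_fst rfl⟩
  exact ⟨hiff, hiff⟩

theorem kRSpace_iff_prod_compact {X : Type u} [TopologicalSpace X] [T35Space X] :
    (KRSpace X ↔
      ∀ (K : Type v) [TopologicalSpace K] [CompactSpace K] [T2Space K],
        KRSpace (X × K)) ∧
    (KRSpace X ↔
      ∀ (K : Type v) [TopologicalSpace K] [CompactSpace K] [T2Space K],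
        ∀ f : X × K → ℝ, KContinuous f → Continuous f) :=
  kRSpace_iff_prod_compact_general
end

section
/- A Tychonoff space X is locally pseudocompact if, and only if, it is locally functionally bounded. -/
open Set Filter Topology

theorem locallyPseudocompact_iff_locallyFunctionallyBounded
    {X : Type*} [TopologicalSpace X] [T35Space X] :
    (∀ x : X, ∃ N ∈ 𝓝 x, Pseudocompact ↥N) ↔
      (∀ x : X, ∃ N ∈ 𝓝 x, FunctionallyBounded N) := by
  constructor
  · intro H x
    obtain ⟨N, hN, hP⟩ := H x
    refine ⟨N, hN, fun f hf => ?_⟩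
    obtain ⟨M, hM⟩ := hP (fun z => f z) (hf.comp continuous_subtype_val)
    exact ⟨M, fun a ha => hM ⟨a, ha⟩⟩
  · intro H x
    obtain ⟨N, hN, hfb⟩ := H x
    have hxU : x ∈ interior N := mem_interior_iff_mem_nhds.mpr hN
    obtain ⟨f0, hf0c, hf0x, hf0K⟩ :=
      CompletelyRegularSpace.completely_regular x (interior N)ᶜ
        isOpen_interior.isClosed_compl (by simpa using hxU)
    set f : X → ℝ := fun y => (f0 y : ℝ) with hfdef
    have hfc : Continuous f := continuous_subtype_val.comp hf0c
    set V : Set X := f ⁻¹' (Iio (1/2)) with hVdef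
    have hVopen : IsOpen V := isOpen_Iio.preimage hfc
    have hxV : x ∈ V := by
      simp only [hVdef, mem_preimage, mem_Iio, hfdef, hf0x]
      norm_num
    have hVN : V ⊆ N := by
      intro z hz
      by_contra hzN
      have hzi : z ∈ (interior N)ᶜ := fun hi => hzN (interior_subset hi)
      have : f z = 1 := by
        have := hf0K hzi
        simp only [hfdef, this]
        norm_num
      simp only [hVdef, mem_preimage, mem_Iio, this] at hz
      norm_num at hz
    set K : Set X := closure V with hKdef
    have hVK : V ⊆ K := subset_closure
    refine ⟨K, mem_of_superset (hVopen.mem_nhds hxV) hVK, ?_⟩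
    intro h hc
    by_contra hub
    push_neg at hub
    classical
    -- c z = |h z| for z ∈ K
    set c : X → ℝ := fun p => if hp : p ∈ K then |h ⟨p, hp⟩| else 0 with hcdef
    have habsc : Continuous fun w : ↥K => |h w| := hc.abs
    have hcK : ∀ (z : X) (hz : z ∈ K), c z = |h ⟨z, hz⟩| := by
      intro z hz
      simp only [hcdef]
      rw [dif_pos hz]
    -- trace neighborhoods: for w in K, small open set controlling c
    have htrace : ∀ (w : X) (hw : w ∈ K), ∃ O : Set X, IsOpen O ∧ w ∈ O ∧
        ∀ z ∈ O, z ∈ K → |c z - c w| < 1/2 := by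
      intro w hw
      have hS : (fun v : ↥K => |h v|) ⁻¹' (Ioo (c w - 1/2) (c w + 1/2)) ∈ 𝓝 (⟨w, hw⟩ : ↥K) := by
        apply (isOpen_Ioo.preimage habsc).mem_nhds
        simp only [mem_preimage, mem_Ioo, ← hcK w hw]
        constructor <;> linarith
      rw [nhds_subtype_eq_comap] at hS
      obtain ⟨O, hO, hOsub⟩ := mem_comap.mp hS
      obtain ⟨O', hO'sub, hO'open, hwO'⟩ := mem_nhds_iff.mp hO
      refine ⟨O', hO'open, hwO', fun z hz hzK => ?_⟩
      have : (⟨z, hzK⟩ : ↥K) ∈ Subtype.val ⁻¹' O := hO'sub hz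
      have := hOsub this
      simp only [mem_preimage, mem_Ioo] at this
      rw [hcK z hzK]
      rw [abs_lt]
      constructor <;> linarith
    -- unboundedness transfers to V
    have key : ∀ M : ℝ, ∃ p, ∃ hp : p ∈ V, M < |h ⟨p, hVK hp⟩| := by
      intro M
      obtain ⟨z, hz⟩ := hub (M + 1)
      obtain ⟨O, hOopen, hzO, hOc⟩ := htrace z.1 z.2
      obtain ⟨p, hpO, hpV⟩ := mem_closure_iff.mp z.2 O hOopen hzO
      refine ⟨p, hpV, ?_⟩
      have h1 := hOc p hpO (hVK hpV)
      rw [hcK p (hVK hpV), hcK z.1 z.2] at h1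
      have hzz : |h ⟨z.1, z.2⟩| = |h z| := rfl
      rw [abs_lt] at h1
      linarith [h1.1, h1.2, hz]
    choose F hFV hFh using key
    -- the sequence
    set v : ℕ → X := fun n => Nat.rec (F 0) (fun _ p => F (c p + 2)) n with hvdef
    have hvV : ∀ n, v n ∈ V := by
      intro n
      cases n with
      | zero => exact hFV 0
      | succ m => exact hFV _
    have hvK : ∀ n, v n ∈ K := fun n => hVK (hvV n)
    have hgap : ∀ n, c (v n) + 2 < c (v (n + 1)) := by
      intro n
      have h1 : v (n+1) = F (c (v n) + 2) := rfl
      have h2 := hFh (c (v n) + 2)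
      rw [← hcK _ (hVK (hFV (c (v n) + 2)))] at h2
      rw [h1]
      exact h2
    have hlt : ∀ m n, m < n → c (v m) + 2 < c (v n) := by
      intro m n
      induction n with
      | zero => intro h0; omega
      | succ k ih =>
        intro hmk
        rcases Nat.lt_succ_iff_lt_or_eq.mp hmk with hlt' | heq
        · have g1 := hgap k
          have g2 := ih hlt'
          linarith
        · subst heq; exact hgap m
    have hsep : ∀ m n, m ≠ n → 2 < |c (v m) - c (v n)| := by
      intro m n hmn
      rcases Nat.lt_or_ge m n with hmn' | hge
      · rw [abs_sub_comm, lt_abs]; left; linarith [hlt m n hmn']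
      · have hnm : n < m := lt_of_le_of_ne hge (Ne.symm hmn)
        rw [lt_abs]; left; linarith [hlt n m hnm]
    -- controlled open sets U n
    have hUex : ∀ n, ∃ U : Set X, IsOpen U ∧ v n ∈ U ∧ U ⊆ V ∧
        ∀ z ∈ U, |c z - c (v n)| < 1/2 := by
      intro n
      obtain ⟨O, hOopen, hvO, hOc⟩ := htrace (v n) (hvK n)
      exact ⟨O ∩ V, hOopen.inter hVopen, ⟨hvO, hvV n⟩, inter_subset_right,
        fun z hz => hOc z hz.1 (hVK hz.2)⟩
    choose U hUo hUv hUV hUc using hUex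
    -- bump functions
    have hbump : ∀ n, ∃ g : X → unitInterval, Continuous g ∧ g (v n) = 0 ∧ EqOn g 1 (U n)ᶜ :=
      fun n => CompletelyRegularSpace.completely_regular (v n) (U n)ᶜ
        (hUo n).isClosed_compl (fun hcon => hcon (hUv n))
    choose g hgc hgv hgU using hbump
    set term : ℕ → X → ℝ := fun n y => (n : ℝ) * (1 - (g n y : ℝ)) with htermdef
    have hsupp : ∀ n y, y ∉ U n → term n y = 0 := by
      intro n y hy
      have : g n y = 1 := hgU n hy
      simp [htermdef, this]
    set G : X → ℝ := fun y => ∑' n, term n y with hGdef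
    -- local structure
    have hloc : ∀ y : X, ∃ O : Set X, IsOpen O ∧ y ∈ O ∧
        ∀ m n, (U m ∩ O).Nonempty → (U n ∩ O).Nonempty → m = n := by
      intro y
      by_cases hy : y ∈ K
      · obtain ⟨O, hOopen, hyO, hOc⟩ := htrace y hy
        refine ⟨O, hOopen, hyO, fun m n ⟨zm, hzm⟩ ⟨zn, hzn⟩ => ?_⟩
        by_contra hmn
        have h1 := hUc m zm hzm.1
        have h2 := hOc zm hzm.2 (hVK (hUV m hzm.1))
        have h3 := hUc n zn hzn.1
        have h4 := hOc zn hzn.2 (hVK (hUV n hzn.1))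
        have h5 := hsep m n hmn
        rw [abs_lt] at h1 h2 h3 h4
        rw [lt_abs] at h5
        rcases h5 with h5 | h5 <;> linarith
      · refine ⟨Kᶜ, isClosed_closure.isOpen_compl, hy, fun m n ⟨zm, hzm⟩ _ => ?_⟩
        exact absurd (hVK (hUV m hzm.1)) hzm.2
    have hGc : Continuous G := by
      rw [continuous_iff_continuousAt]
      intro y
      obtain ⟨O, hOopen, hyO, hsub⟩ := hloc y
      by_cases hex : ∃ n, (U n ∩ O).Nonempty
      · obtain ⟨n, hn⟩ := hex
        have heq : ∀ z ∈ O, G z = term n z := by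
          intro z hz
          apply tsum_eq_single n
          intro m hmn
          apply hsupp
          intro hzUm
          exact hmn (hsub m n ⟨z, hzUm, hz⟩ hn)
        have hct : ContinuousAt (term n) y :=
          (continuous_const.mul (continuous_const.sub
            (continuous_subtype_val.comp (hgc n)))).continuousAt
        apply hct.congr
        filter_upwards [hOopen.mem_nhds hyO] with z hz
        exact (heq z hz).symm
      · have heq : ∀ z ∈ O, G z = 0 := by
          intro z hz
          have : ∀ m, term m z = 0 := by
            intro m
            apply hsupp
            intro hzUm
            exact hex ⟨m, z, hzUm, hz⟩
          simp [hGdef, this]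
        apply continuousAt_const.congr (f := fun _ => (0:ℝ))
        filter_upwards [hOopen.mem_nhds hyO] with z hz
        exact (heq z hz).symm
    -- contradiction
    obtain ⟨M, hM⟩ := hfb G hGc
    set n : ℕ := ⌈M⌉₊ + 1 with hndef
    have hGv : G (v n) = n := by
      have : G (v n) = term n (v n) := by
        apply tsum_eq_single n
        intro m hmn
        apply hsupp
        intro hvUm
        have h1 := hUc m (v n) hvUm
        have h2 := hsep m n hmn
        rw [abs_sub_comm] at h1
        rw [lt_abs] at h2
        rw [abs_lt] at h1
        rcases h2 with h2 | h2 <;> linarith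
      rw [this]
      simp [htermdef, hgv n]
    have hbound := hM (v n) (hVN (hvV n))
    rw [hGv] at hbound
    have h1 : M ≤ (⌈M⌉₊ : ℝ) := Nat.le_ceil M
    have h2 : |((n : ℕ) : ℝ)| = (n : ℝ) := abs_of_nonneg (Nat.cast_nonneg n)
    rw [h2] at hbound
    have : ((⌈M⌉₊ + 1 : ℕ) : ℝ) = (⌈M⌉₊ : ℝ) + 1 := by push_cast; ring
    rw [hndef] at hbound
    rw [this] at hbound
    linarith
end

section
/- Let Y be a locally compact Tychonoff space which is an s_ℝ-space, and let X be an s_ℝ-space. Then the product X × Y is an s_ℝ-space. -/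
open Set Filter Topology

/-!
Fix `(x₀, y₀)` and a compact neighbourhood `K` of `y₀`. It suffices that `x ↦ f (x, ·)|_K` is
continuous into the metric space `C(K, ℝ)`, and in an `s_ℝ`-space sequential continuity into a
metric space already gives continuity (distances to a point are real-valued). A sequence
converging to `x` is a continuous map `ℕ∞ → X`, so what is needed is the continuity of
`f` on `ℕ∞ × Y`, i.e. that `ℕ∞ × Y` is an `s_ℝ`-space. That is the same argument with the roles
swapped: for compact first-countable `T`, the map `y ↦ G (·, y) ∈ C(T, ℝ)` is sequentially
continuous because on the first-countable space `ℕ∞ × T` sequential continuity is continuity.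
-/

section

variable {X Y : Type*} [TopologicalSpace X] [TopologicalSpace Y]

theorem SeqContinuous.comp_continuous {Z : Type*} [TopologicalSpace Z] {f : Y → Z} {g : X → Y}
    (hf : SeqContinuous f) (hg : Continuous g) : SeqContinuous (f ∘ g) :=
  fun _ _ hx => hf ((hg.tendsto _).comp hx)

def seqExtend (u : ℕ → X) (x : X) : ℕ∞ → X :=
  ENat.recTopCoe x u

theorem continuous_seqExtend {u : ℕ → X} {x : X} (hu : Tendsto u atTop (𝓝 x)) :
    Continuous (seqExtend u x) := by
  refine continuous_iff_continuousAt.2 fun n => ?_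
  induction n using ENat.recTopCoe with
  | top =>
    refine (nhds_top_basis.tendsto_iff (𝓝 x).basis_sets).2 fun s hs => ?_
    obtain ⟨N, hN⟩ := eventually_atTop.1 (hu hs)
    refine ⟨N, ENat.natCast_lt_top N, fun m hm => ?_⟩
    induction m using ENat.recTopCoe with
    | top => exact mem_of_mem_nhds hs
    | coe m => exact hN m (by simp only [mem_Ioi, Nat.cast_lt] at hm; exact hm.le)
  | coe n => simp [ContinuousAt, tendsto_pure_nhds]

theorem seqContinuous_of_continuous_comp_seqExtend {Z : Type*} [TopologicalSpace Z] {f : X → Z}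
    (hf : ∀ u x, Tendsto u atTop (𝓝 x) → Continuous (f ∘ seqExtend u x)) : SeqContinuous f :=
  fun u x hu => ((hf u x hu).tendsto ⊤).comp ENat.tendsto_natCast_nhds_top

theorem seqContinuous_of_continuous_uncurry_comp_seqExtend {B Z : Type*} [TopologicalSpace B]
    [TopologicalSpace Z] {Φ : X → C(B, Z)}
    (hΦ : ∀ u x, Tendsto u atTop (𝓝 x) → Continuous fun p : ℕ∞ × B => Φ (seqExtend u x p.1) p.2) :
    SeqContinuous Φ :=
  seqContinuous_of_continuous_comp_seqExtend fun u x hu =>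
    (ContinuousMap.curry ⟨_, hΦ u x hu⟩).continuous

theorem SRSpace.continuous_of_seqContinuous {M : Type*} [PseudoMetricSpace M] (hX : SRSpace X)
    {F : X → M} (hF : SeqContinuous F) : Continuous F := by
  refine continuous_iff_continuousAt.2 fun x => tendsto_iff_dist_tendsto_zero.2 ?_
  have hdist : Continuous fun y => dist (F y) (F x) :=
    hX _ fun _ _ hy => ((continuous_id.dist continuous_const).tendsto _).comp (hF hy)
  simpa using hdist.tendsto x

theorem SRSpace.prod_compact_left {T : Type*} [TopologicalSpace T] [CompactSpace T]
    [FirstCountableTopology T] (hY : SRSpace Y) : SRSpace (T × Y) := by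
  intro G hG
  let Φ : Y → C(T, ℝ) := fun y =>
    ⟨fun t => G (t, y), (hG.comp_continuous (continuous_id.prodMk continuous_const)).continuous⟩
  have hΦ : SeqContinuous Φ := seqContinuous_of_continuous_uncurry_comp_seqExtend fun _ _ hz =>
    (hG.comp_continuous <|
      continuous_snd.prodMk ((continuous_seqExtend hz).comp continuous_fst)).continuous
  have hΦ_cont : Continuous Φ := hY.continuous_of_seqContinuous hΦ
  exact continuous_eval.comp ((hΦ_cont.comp continuous_snd).prodMk continuous_fst)

end

theorem sRSpace_prod_locallyCompact_general {X Y : Type*} [TopologicalSpace X]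
    [TopologicalSpace Y] [LocallyCompactSpace Y]
    (hY : SRSpace Y) (hX : SRSpace X) : SRSpace (X × Y) := by
  intro f hf
  refine continuous_iff_continuousAt.2 fun ⟨x₀, y₀⟩ => ?_
  obtain ⟨K, hK, hKy₀⟩ := exists_compact_mem_nhds y₀
  have : CompactSpace K := isCompact_iff_compactSpace.mp hK
  have hsection (x : X) : Continuous fun y => f (x, y) :=
    hY _ (hf.comp_continuous (Continuous.prodMk_right x))
  let F : X → C(K, ℝ) := fun x => ⟨fun y => f (x, y), (hsection x).comp continuous_subtype_val⟩
  have hF : SeqContinuous F := seqContinuous_of_continuous_uncurry_comp_seqExtend fun _ _ hu =>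
    (hY.prod_compact_left _ <|
      hf.comp_continuous ((continuous_seqExtend hu).prodMap continuous_id)).comp
      (continuous_id.prodMap continuous_subtype_val)
  have hfK : Continuous fun p : X × K => f (p.1, p.2) :=
    continuous_eval.comp ((hX.continuous_of_seqContinuous hF).prodMap continuous_id)
  have hfOn : ContinuousOn f (univ ×ˢ K) := continuousOn_iff_continuous_domRestrict.2 <|
    hfK.comp ((continuous_fst.comp continuous_subtype_val).prodMk
      ((continuous_snd.comp continuous_subtype_val).subtype_mk fun p => p.2.2))
  exact hfOn.continuousAt (prod_mem_nhds univ_mem hKy₀)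

theorem sRSpace_prod_locallyCompact {X Y : Type*} [TopologicalSpace X] [T35Space X]
    [TopologicalSpace Y] [T35Space Y] [LocallyCompactSpace Y]
    (hY : SRSpace Y) (hX : SRSpace X) : SRSpace (X × Y) :=
  sRSpace_prod_locallyCompact_general hY hX
end
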